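/- arXiv:2605.27490 — 5 statements merged into one kernel-verified Lean document; each statement's English description precedes it below -/
import Mathlib

section
/- Let T be a finite tree with maximum degree at most 3, let S ⊆ V(T) with |S| = N ≥ 16, and let A be a deterministic search strategy on T that is correct on S. Then the average query cost of A over S satisfies (1/N) · Σ_{t ∈ S} Q_A(t) ≥ (3/4) · (⌊log₄ N⌋ − 2). -/
open SimpleGraph

/-- The direction oracle: when the target is `t` and we query `v`, the oracle
returns `none` (meaning "here") if `v = t`, and otherwise returns `some u` where
`u` is the unique neighbor of `v` on the path from `v` to `t` (i.e. the neighbor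
strictly closer to `t`). -/
noncomputable def dirO {V : Type} (T : SimpleGraph V) (t v : V) : Option V :=
  letI : Decidable (∃ u, T.Adj v u ∧ T.dist u t + 1 = T.dist v t) := Classical.dec _
  if h : ∃ u, T.Adj v u ∧ T.dist u t + 1 = T.dist v t then some h.choose else none

/-- A deterministic search strategy: chooses the next vertex to query as a
function of the history of (query, oracle answer) pairs so far. -/
def Strategy (V : Type) := List (V × Option V) → V

/-- The history of the first `n` queries and answers when running strategy `σ`
against target `t` in tree `T`. -/
noncomputable def histRun {V : Type} (T : SimpleGraph V) (σ : Strategy V) (t : V) :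
    ℕ → List (V × Option V)
  | 0 => []
  | n + 1 =>
      histRun T σ t n ++ [(σ (histRun T σ t n), dirO T t (σ (histRun T σ t n)))]

/-- The `n`-th query (0-indexed) made by strategy `σ` against target `t`. -/
noncomputable def queryAt {V : Type} (T : SimpleGraph V) (σ : Strategy V) (t : V) (n : ℕ) : V :=
  σ (histRun T σ t n)

/-- The query cost of strategy `σ` on target `t`: the number of queries made up to
and including the first query of `t` itself. -/
noncomputable def costOf {V : Type} (T : SimpleGraph V) (σ : Strategy V) (t : V) : ℕ :=
  sInf {n | queryAt T σ t n = t} + 1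

/-- A strategy is correct on a target set `S` if for every target in `S` it
eventually queries the target. -/
def CorrectOn {V : Type} (T : SimpleGraph V) (σ : Strategy V) (S : Set V) : Prop :=
  ∀ t ∈ S, ∃ n, queryAt T σ t n = t

/-- A path decomposition of a graph. -/
structure PathDecomp {V : Type} (G : SimpleGraph V) where
  m : ℕ
  bags : Fin m → Finset V
  cover : ∀ v, ∃ i, v ∈ bags i
  edgeCover : ∀ ⦃u v⦄, G.Adj u v → ∃ i, u ∈ bags i ∧ v ∈ bags i
  interval : ∀ (v : V) (i j k : Fin m), i ≤ j → j ≤ k → v ∈ bags i → v ∈ bags k → v ∈ bags j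

/-- The pathwidth of a graph: the least `w` such that there is a path
decomposition all of whose bags have at most `w + 1` vertices. -/
noncomputable def pathwidth {V : Type} (G : SimpleGraph V) : ℕ :=
  sInf { w | ∃ D : PathDecomp G, ∀ i, (D.bags i).card ≤ w + 1 }

/-- The vertex set of the connected component of `y` in `G − S` (the graph with
the vertex set `S` deleted): all vertices reachable from `y` by a walk avoiding `S`. -/
def compSet {V : Type} (G : SimpleGraph V) (S : Set V) (y : V) : Set V :=
  {z | ∃ w : G.Walk y z, ∀ v ∈ w.support, v ∉ S}

lemma dirO_self {V : Type} (T : SimpleGraph V) (t : V) : dirO T t t = none := by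
  unfold dirO
  rw [dif_neg]
  rintro ⟨u, -, hd⟩
  rw [SimpleGraph.dist_self] at hd
  omega

lemma dirO_ne_none {V : Type} {T : SimpleGraph V} (hc : T.Connected) {t v : V} (h : v ≠ t) :
    dirO T t v ≠ none := by
  unfold dirO
  rw [dif_pos]
  · simp
  · obtain ⟨p, hp⟩ := hc.exists_walk_length_eq_dist v t
    cases p with
    | nil => exact absurd rfl h
    | @cons _ u _ hadj q =>
        refine ⟨u, hadj, ?_⟩
        have h1 : T.dist u t ≤ q.length := SimpleGraph.dist_le q
        have h2 : T.dist v t ≤ T.dist u t + 1 := by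
          obtain ⟨r, hr⟩ := hc.exists_walk_length_eq_dist u t
          have := SimpleGraph.dist_le (SimpleGraph.Walk.cons hadj r)
          simpa [hr, Nat.add_comm] using this
        simp only [SimpleGraph.Walk.length_cons] at hp
        omega

lemma dirO_adj {V : Type} {T : SimpleGraph V} {t v u : V} (h : dirO T t v = some u) :
    T.Adj v u := by
  unfold dirO at h
  split at h
  · rename_i hex
    obtain rfl := Option.some.inj h
    exact hex.choose_spec.1
  · simp at h

lemma hist_eq_of_ans_eq {V : Type} {T : SimpleGraph V} {σ : Strategy V} {t t' : V} {n : ℕ}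
    (h : ∀ i < n, dirO T t (queryAt T σ t i) = dirO T t' (queryAt T σ t' i)) :
    histRun T σ t n = histRun T σ t' n := by
  induction n with
  | zero => rfl
  | succ n ih =>
    have hh := ih (fun i hi => h i (by omega))
    have hq : dirO T t (σ (histRun T σ t n)) = dirO T t' (σ (histRun T σ t' n)) :=
      h n (by omega)
    rw [← hh] at hq
    show histRun T σ t n ++ [(σ (histRun T σ t n), dirO T t (σ (histRun T σ t n)))]
        = histRun T σ t' n ++ [(σ (histRun T σ t' n), dirO T t' (σ (histRun T σ t' n)))]
    rw [← hh, hq]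

/-- Encoding of the `i`-th oracle answer as a number `< 4`. -/
noncomputable def codeF {V : Type} (T : SimpleGraph V) (σ : Strategy V)
    (e : V → V → Fin 3) (t : V) (i : ℕ) : ℕ :=
  match dirO T t (queryAt T σ t i) with
  | none => 0
  | some u => (e (queryAt T σ t i) u).val + 1

lemma codeF_lt_four {V : Type} (T : SimpleGraph V) (σ : Strategy V)
    (e : V → V → Fin 3) (t : V) (i : ℕ) : codeF T σ e t i < 4 := by
  unfold codeF
  split
  · omega
  · rename_i u _
    have := (e (queryAt T σ t i) u).isLt
    omega

lemma codeF_of_none {V : Type} {T : SimpleGraph V} {σ : Strategy V}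
    {e : V → V → Fin 3} {t : V} {i : ℕ}
    (h : dirO T t (queryAt T σ t i) = none) : codeF T σ e t i = 0 := by
  unfold codeF; rw [h]

lemma codeF_of_some {V : Type} {T : SimpleGraph V} {σ : Strategy V}
    {e : V → V → Fin 3} {t u : V} {i : ℕ}
    (h : dirO T t (queryAt T σ t i) = some u) :
    codeF T σ e t i = (e (queryAt T σ t i) u).val + 1 := by
  unfold codeF; rw [h]

lemma card_cost_le {V : Type} [Fintype V] {T : SimpleGraph V} (hc : T.Connected)
    {σ : Strategy V} {S : Set V} (hσ : CorrectOn T σ S)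
    (e : V → V → Fin 3)
    (einj : ∀ v u u', T.Adj v u → T.Adj v u' → e v u = e v u' → u = u') (j : ℕ) :
    ((Set.toFinite S).toFinset.filter (fun t => costOf T σ t ≤ j)).card ≤ 4 ^ j := by
  classical
  have hbd := codeF_lt_four T σ e
  calc ((Set.toFinite S).toFinset.filter (fun t => costOf T σ t ≤ j)).card
      ≤ (Finset.univ : Finset (Fin j → Fin 4)).card := by
        apply Finset.card_le_card_of_injOn
          (fun t => fun i : Fin j => (⟨codeF T σ e t i, hbd t i⟩ : Fin 4))
        · exact fun a _ => Finset.mem_univ _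
        · intro t ht t' ht' hcode
          simp only [Finset.coe_filter, Set.mem_setOf_eq, Set.Finite.mem_toFinset] at ht ht'
          obtain ⟨htS, hcost⟩ := ht
          obtain ⟨ht'S, hcost'⟩ := ht'
          have hcd : ∀ i < j, codeF T σ e t i = codeF T σ e t' i := by
            intro i hi
            have := congrFun hcode ⟨i, hi⟩
            simpa using congrArg Fin.val this
          set m := sInf {n | queryAt T σ t n = t} with hm
          have hmem : queryAt T σ t m = t := Nat.sInf_mem (hσ t htS)
          have hmj : m + 1 ≤ j := hcost
          have hltm : ∀ i < m, queryAt T σ t i ≠ t := fun i hi =>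
            Nat.notMem_of_lt_sInf hi
          have hans : ∀ i, i < m → dirO T t (queryAt T σ t i) = dirO T t' (queryAt T σ t' i) := by
            intro i
            induction i using Nat.strong_induction_on with
            | _ i IH =>
              intro hi
              have hh : histRun T σ t i = histRun T σ t' i :=
                hist_eq_of_ans_eq (fun i' hi' => IH i' hi' (lt_trans hi' hi))
              have hq : queryAt T σ t i = queryAt T σ t' i := congrArg σ hh
              obtain ⟨u, hu⟩ := Option.ne_none_iff_exists'.mp (dirO_ne_none hc (hltm i hi))
              have hcu := codeF_of_some (e := e) hu
              have hij : i < j := by omega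
              have hcdi := hcd i hij
              cases hopt' : dirO T t' (queryAt T σ t' i) with
              | none =>
                  have := codeF_of_none (e := e) hopt'
                  omega
              | some u' =>
                  have hcu' := codeF_of_some (e := e) hopt'
                  rw [← hq] at hcu'
                  have hval : (e (queryAt T σ t i) u).val = (e (queryAt T σ t i) u').val := by
                    omega
                  have hee : e (queryAt T σ t i) u = e (queryAt T σ t i) u' := Fin.ext hval
                  have hadj : T.Adj (queryAt T σ t i) u := dirO_adj hu
                  have hadj' : T.Adj (queryAt T σ t i) u' := by
                    rw [hq]; exact dirO_adj hopt'
                  have : u = u' := einj _ _ _ hadj hadj' hee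
                  rw [hu, this]
          have hh : histRun T σ t m = histRun T σ t' m := hist_eq_of_ans_eq hans
          have hq : queryAt T σ t m = queryAt T σ t' m := congrArg σ hh
          have hct : codeF T σ e t m = 0 := codeF_of_none (by rw [hmem]; exact dirO_self T t)
          have hct' : codeF T σ e t' m = 0 := by rw [← hcd m (by omega)]; exact hct
          have hnone' : dirO T t' (queryAt T σ t' m) = none := by
            cases hopt' : dirO T t' (queryAt T σ t' m) with
            | none => rfl
            | some u' =>
                have := codeF_of_some (e := e) hopt'
                omega
          have : queryAt T σ t' m = t' := by
            by_contra hne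
            exact dirO_ne_none hc hne hnone'
          rw [← this, ← hq, hmem]
    _ = 4 ^ j := by simp [Finset.card_univ]

/-- Let `T` be a finite tree with maximum degree at most `3`, let
`S ⊆ V(T)` with `|S| = N ≥ 16`, and let `A` be a deterministic search strategy on `T`
correct on `S`.  Then the average query cost of `A` over `S` satisfies
`(1/N) · Σ_{t ∈ S} Q_A(t) ≥ (3/4) · (⌊log₄ N⌋ − 2)`. -/
theorem average_cost_lower_bound_of_max_degree_three
    (V : Type) [Fintype V] (T : SimpleGraph V) (hT : T.IsTree)
    (hdeg : ∀ v : V, (T.neighborSet v).ncard ≤ 3)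
    (S : Set V) (N : ℕ) (hN : N = S.ncard) (h16 : 16 ≤ N)
    (σ : Strategy V) (hσ : CorrectOn T σ S) :
    (3 / 4 : ℝ) * ((Nat.log 4 N : ℝ) - 2) ≤
      (1 / N : ℝ) * ∑ t ∈ (Set.toFinite S).toFinset, (costOf T σ t : ℝ) := by
  classical
  have hc : T.Connected := hT.isConnected
  set Sfin := (Set.toFinite S).toFinset with hSfin
  have hcard : Sfin.card = N := by
    rw [hN, Set.ncard_eq_toFinset_card]
  have hne : ∀ v : V, Nonempty (T.neighborSet v ↪ Fin 3) := by
    intro v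
    haveI : Fintype (T.neighborSet v) := Fintype.ofFinite _
    apply Function.Embedding.nonempty_of_card_le
    rw [Fintype.card_fin]
    have h := hdeg v
    rwa [Set.ncard_eq_toFinset_card', Set.toFinset_card] at h
  set emb : ∀ v : V, T.neighborSet v ↪ Fin 3 := fun v => (hne v).some with hemb
  set e : V → V → Fin 3 := fun v u => if h : T.Adj v u then emb v ⟨u, h⟩ else 0 with he
  have einj : ∀ v u u', T.Adj v u → T.Adj v u' → e v u = e v u' → u = u' := by
    intro v u u' h h' hee
    simp only [he, dif_pos h, dif_pos h'] at hee
    have := (emb v).injective hee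
    exact congrArg Subtype.val this
  have key : ∀ j, (Sfin.filter (fun t => costOf T σ t ≤ j)).card ≤ 4 ^ j :=
    fun j => card_cost_le hc hσ e einj j
  set k := Nat.log 4 N with hk
  have h4k : 4 ^ k ≤ N := Nat.pow_log_le_self 4 (by omega)
  have hP : ∀ j, N ≤ 4 ^ j + (Sfin.filter (fun t => j < costOf T σ t)).card := by
    intro j
    have hsplit := Finset.card_filter_add_card_filter_not
      (s := Sfin) (p := fun t => costOf T σ t ≤ j)
    have heq : Sfin.filter (fun t => ¬ costOf T σ t ≤ j)
        = Sfin.filter (fun t => j < costOf T σ t) := by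
      apply Finset.filter_congr
      intro x _
      simp [not_le]
    rw [heq, hcard] at hsplit
    have hkey := key j
    omega
  have hsum1 : ∀ t ∈ Sfin,
      ((Finset.range k).filter (fun jj => jj < costOf T σ t)).card ≤ costOf T σ t := by
    intro t _
    calc ((Finset.range k).filter (fun jj => jj < costOf T σ t)).card
        ≤ (Finset.range (costOf T σ t)).card := by
          apply Finset.card_le_card
          intro x hx
          simp only [Finset.mem_filter, Finset.mem_range] at hx ⊢
          omega
      _ = costOf T σ t := Finset.card_range _
  have hNat : ∑ j ∈ Finset.range k, (Sfin.filter (fun t => j < costOf T σ t)).card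
      ≤ ∑ t ∈ Sfin, costOf T σ t := by
    have hswap : ∑ j ∈ Finset.range k, (Sfin.filter (fun t => j < costOf T σ t)).card
        = ∑ t ∈ Sfin, ((Finset.range k).filter (fun jj => jj < costOf T σ t)).card := by
      simp only [Finset.card_filter]
      rw [Finset.sum_comm]
    rw [hswap]
    exact Finset.sum_le_sum hsum1
  have hNpos : (0:ℝ) < (N:ℝ) := by
    have : 0 < N := by omega
    exact_mod_cast this
  have hR1 : (N:ℝ) * ((k:ℝ) - 1/3) ≤ ∑ t ∈ Sfin, (costOf T σ t : ℝ) := by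
    have hc1 : ∑ j ∈ Finset.range k, ((N:ℝ) - 4^j)
        ≤ ∑ j ∈ Finset.range k, ((Sfin.filter (fun t => j < costOf T σ t)).card : ℝ) := by
      apply Finset.sum_le_sum
      intro j _
      have := hP j
      have h2 : (N:ℝ) ≤ (4:ℝ)^j + ((Sfin.filter (fun t => j < costOf T σ t)).card : ℝ) := by
        exact_mod_cast this
      linarith
    have hc2 : ∑ j ∈ Finset.range k, ((Sfin.filter (fun t => j < costOf T σ t)).card : ℝ)
        ≤ ∑ t ∈ Sfin, (costOf T σ t : ℝ) := by
      exact_mod_cast hNat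
    have hc3 : (N:ℝ) * ((k:ℝ) - 1/3) ≤ ∑ j ∈ Finset.range k, ((N:ℝ) - 4^j) := by
      rw [Finset.sum_sub_distrib, Finset.sum_const, Finset.card_range,
        geom_sum_eq (by norm_num : (4:ℝ) ≠ 1) k, nsmul_eq_mul]
      have h4 : (4:ℝ)^k ≤ (N:ℝ) := by exact_mod_cast h4k
      have h5 : ((4:ℝ)^k - 1)/(4 - 1) ≤ (N:ℝ)/3 := by
        rw [show (4:ℝ) - 1 = 3 by norm_num]
        linarith
      nlinarith [hNpos, h5]
    linarith
  have hk0 : (0:ℝ) ≤ (k:ℝ) := Nat.cast_nonneg k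
  have hfinal : (k:ℝ) - 1/3 ≤ (1/(N:ℝ)) * ∑ t ∈ Sfin, (costOf T σ t : ℝ) := by
    have h6 := mul_le_mul_of_nonneg_left hR1 (le_of_lt (by positivity : (0:ℝ) < 1/(N:ℝ)))
    have h7 : (1/(N:ℝ)) * ((N:ℝ) * ((k:ℝ) - 1/3)) = (k:ℝ) - 1/3 := by
      field_simp
    linarith
  linarith
end

section
/- Every finite tree T with pathwidth pw(T) = k ≥ 1 contains a path P such that every connected component of T − V(P) has pathwidth at most k − 1. -/
open SimpleGraph

private lemma hit_bag {V : Type} {T : SimpleGraph V} (D : PathDecomp T) (i : Fin D.m) :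
    ∀ {u w : V} (p : T.Walk u w) (j l : Fin D.m), j ≤ i → i ≤ l →
      u ∈ D.bags j → w ∈ D.bags l → ∃ v ∈ p.support, v ∈ D.bags i := by
  intro u w p
  induction p with
  | nil =>
    intro j l hj hl hu hw
    exact ⟨_, by simp, D.interval _ j i l hj hl hu hw⟩
  | cons h q ih =>
    intro j l hj hl hu hw
    obtain ⟨e, he1, he2⟩ := D.edgeCover h
    by_cases hei : i ≤ e
    · exact ⟨_, by simp, D.interval _ j i e hj hei hu he1⟩
    · push_neg at hei
      obtain ⟨v, hv1, hv2⟩ := ih e l hei.le hl he2 hw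
      exact ⟨v, by simp [hv1], hv2⟩

/-- Every finite tree `T` with pathwidth `k ≥ 1` contains a path `P`
such that every connected component of `T − V(P)` has pathwidth at most `k − 1`. -/
theorem exists_spine :
    ∀ (V : Type) [Fintype V] (T : SimpleGraph V), T.IsTree →
      1 ≤ pathwidth T →
      ∃ (u w : V) (p : T.Walk u w), p.IsPath ∧
        ∀ y : V, y ∉ p.support →
          pathwidth (SimpleGraph.induce (compSet T {v | v ∈ p.support} y) T) ≤
            pathwidth T - 1 := by
  intro V _ T hT hk
  classical
  have hne : {w | ∃ D : PathDecomp T, ∀ i, (D.bags i).card ≤ w + 1}.Nonempty := by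
    refine ⟨Fintype.card V,
      ⟨1, fun _ => Finset.univ, fun v => ⟨0, Finset.mem_univ v⟩,
        fun u v _ => ⟨0, Finset.mem_univ u, Finset.mem_univ v⟩,
        fun v i j k _ _ _ _ => Finset.mem_univ v⟩, fun i => ?_⟩
    simp
  obtain ⟨D, hD⟩ : ∃ D : PathDecomp T, ∀ i, (D.bags i).card ≤ pathwidth T + 1 :=
    Nat.sInf_mem hne
  have hVne : Nonempty V := hT.isConnected.nonempty
  obtain ⟨v0⟩ := hVne
  have hSne : (Finset.univ.filter (fun i : Fin D.m => (D.bags i).Nonempty)).Nonempty := by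
    obtain ⟨i, hi⟩ := D.cover v0
    exact ⟨i, by simp only [Finset.mem_filter, Finset.mem_univ, true_and]; exact ⟨v0, hi⟩⟩
  set S := Finset.univ.filter (fun i : Fin D.m => (D.bags i).Nonempty) with hS
  set a := S.min' hSne with ha
  set b := S.max' hSne with hb
  have haS : (D.bags a).Nonempty := by
    have := S.min'_mem hSne
    simpa [hS, Finset.mem_filter] using this
  have hbS : (D.bags b).Nonempty := by
    have := S.max'_mem hSne
    simpa [hS, Finset.mem_filter] using this
  obtain ⟨u, hu⟩ := haS
  obtain ⟨w, hw⟩ := hbS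
  obtain ⟨w0⟩ := hT.isConnected.preconnected u w
  refine ⟨u, w, w0.toPath.val, w0.toPath.prop, ?_⟩
  intro y hy
  set C := compSet T {v | v ∈ (w0.toPath.val).support} y with hC
  have hCavoid : ∀ z ∈ C, z ∉ (w0.toPath.val).support := by
    rintro z ⟨wk, hwk⟩
    exact hwk z wk.end_mem_support
  have hhit : ∀ i : Fin D.m, (D.bags i).Nonempty →
      ∃ v ∈ (w0.toPath.val).support, v ∈ D.bags i := by
    intro i hi
    have hiS : i ∈ S := by
      simp only [hS, Finset.mem_filter, Finset.mem_univ, true_and]; exact hi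
    exact hit_bag D i (w0.toPath.val) a b (S.min'_le i hiS) (S.le_max' i hiS) hu hw
  refine Nat.sInf_le ⟨⟨D.m, fun i => (D.bags i).subtype (fun v => v ∈ C),
    ?_, ?_, ?_⟩, ?_⟩
  · intro z
    obtain ⟨i, hi⟩ := D.cover z.val
    exact ⟨i, Finset.mem_subtype.2 hi⟩
  · intro z1 z2 hadj
    have : T.Adj z1.val z2.val := hadj
    obtain ⟨i, h1, h2⟩ := D.edgeCover this
    exact ⟨i, Finset.mem_subtype.2 h1, Finset.mem_subtype.2 h2⟩
  · intro z i j k hij hjk hzi hzk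
    exact Finset.mem_subtype.2
      (D.interval z.val i j k hij hjk (Finset.mem_subtype.1 hzi) (Finset.mem_subtype.1 hzk))
  · intro i
    simp only [Finset.card_subtype]
    by_cases hbag : (D.bags i).Nonempty
    · obtain ⟨v, hv1, hv2⟩ := hhit i hbag
      have hvC : v ∉ C := fun h => hCavoid v h hv1
      have hsub : (D.bags i).filter (fun x => x ∈ C) ⊆ (D.bags i).erase v := by
        intro x hx
        rw [Finset.mem_filter] at hx
        exact Finset.mem_erase.2 ⟨fun hxv => hvC (hxv ▸ hx.2), hx.1⟩
      calc ((D.bags i).filter (fun x => x ∈ C)).card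
          ≤ ((D.bags i).erase v).card := Finset.card_le_card hsub
        _ = (D.bags i).card - 1 := Finset.card_erase_of_mem hv2
        _ ≤ pathwidth T - 1 + 1 := by have := hD i; omega
    · rw [Finset.not_nonempty_iff_eq_empty] at hbag
      simp [hbag]
end

section
/- For every finite tree T and every integer k ≥ 1: pw(T) ≤ k if and only if for every vertex x ∈ V(T), at most two connected components of T − x have pathwidth at least k. Moreover pw(T) = 0 if and only if T consists of a single vertex. In particular, if some vertex x of T has at least three components of T − x of pathwidth at least r, then pw(T) ≥ r + 1. -/
open SimpleGraph

section CompSet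
variable {V : Type} {T : SimpleGraph V} {D : Set V} {x y z v : V}

lemma mem_compSet_self (h : y ∉ D) : y ∈ compSet T D y :=
  ⟨Walk.nil, by simp [h]⟩

lemma not_mem_del_of_mem_compSet (h : z ∈ compSet T D y) : z ∉ D := by
  obtain ⟨w, hw⟩ := h
  exact hw z w.end_mem_support

lemma mem_compSet_of_walk (w : T.Walk y z) (hw : ∀ u ∈ w.support, u ∉ D)
    (hv : v ∈ w.support) : v ∈ compSet T D y := by
  classical
  exact ⟨w.takeUntil v hv, fun u hu => hw u (w.support_takeUntil_subset hv hu)⟩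

lemma compSet_eq_of_mem (h : z ∈ compSet T D y) : compSet T D y = compSet T D z := by
  obtain ⟨w, hw⟩ := h
  ext u
  constructor
  · rintro ⟨w2, h2⟩
    refine ⟨w.reverse.append w2, fun a ha => ?_⟩
    rcases (Walk.mem_support_append_iff _ _).1 ha with h' | h'
    · exact hw a (by simpa using h')
    · exact h2 a h'
  · rintro ⟨w2, h2⟩
    refine ⟨w.append w2, fun a ha => ?_⟩
    rcases (Walk.mem_support_append_iff _ _).1 ha with h' | h'
    · exact hw a h'
    · exact h2 a h'

lemma adj_mem_compSet (h : z ∈ compSet T D y) (ha : T.Adj z v) (hv : v ∉ D) :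
    v ∈ compSet T D y := by
  obtain ⟨w, hw⟩ := h
  refine ⟨w.append (Walk.cons ha Walk.nil), fun u hu => ?_⟩
  rcases (Walk.mem_support_append_iff _ _).1 hu with h' | h'
  · exact hw u h'
  · simp only [Walk.support_cons, Walk.support_nil, List.mem_cons, List.mem_singleton] at h'
    rcases h' with h' | h' | h'
    · exact h' ▸ hw z w.end_mem_support
    · exact h' ▸ hv
    · simp at h'

lemma exists_adj_mem_compSet (hyx : y ≠ x)
    (w : T.Walk y x) (hw : ∀ v ∈ w.support, v ∉ D) :
    ∃ u, T.Adj x u ∧ u ∈ compSet T (D ∪ {x}) y := by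
  induction w with
  | nil => exact absurd rfl hyx
  | @cons a b c h p ih =>
    have ha : a ∉ D := hw a (by simp)
    by_cases hb : b = c
    · subst hb
      exact ⟨a, h.symm, mem_compSet_self (by simp [ha, hyx])⟩
    · have hp : ∀ v ∈ p.support, v ∉ D := fun v hv => hw v (by simp [hv])
      obtain ⟨u, hu1, hu2⟩ := ih hb hp
      refine ⟨u, hu1, ?_⟩
      have hmem : b ∈ compSet T (D ∪ {c}) a :=
        adj_mem_compSet (mem_compSet_self (by simp [ha, hyx])) h
          (by simp [hb, hw b (by simp)])
      rw [compSet_eq_of_mem hmem]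
      exact hu2

lemma exists_walk_from_root (hzx : z ≠ x) (w : T.Walk z x) (hw : ∀ v ∈ w.support, v ∉ D) :
    ∃ w' : T.Walk x z, ∀ v ∈ w'.support, v = x ∨ v ∈ compSet T (D ∪ {x}) z := by
  induction w with
  | nil => exact absurd rfl hzx
  | @cons a b c h p ih =>
    have ha : a ∉ D := hw a (by simp)
    have haself : a ∈ compSet T (D ∪ {c}) a := mem_compSet_self (by simp [ha, hzx])
    by_cases hb : b = c
    · subst hb
      refine ⟨Walk.cons h.symm Walk.nil, fun v hv => ?_⟩
      simp only [Walk.support_cons, Walk.support_nil, List.mem_cons, List.mem_singleton] at hv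
      rcases hv with rfl | rfl | hv
      · exact Or.inl rfl
      · exact Or.inr haself
      · simp at hv
    · have hp : ∀ v ∈ p.support, v ∉ D := fun v hv => hw v (by simp [hv])
      obtain ⟨w', hw'⟩ := ih hb hp
      have hmem : b ∈ compSet T (D ∪ {c}) a :=
        adj_mem_compSet haself h (by simp [hb, hw b (by simp)])
      refine ⟨w'.append (Walk.cons h.symm Walk.nil), fun v hv => ?_⟩
      rcases (Walk.mem_support_append_iff _ _).1 hv with h' | h'
      · rcases hw' v h' with h'' | h''
        · exact Or.inl h''
        · rw [compSet_eq_of_mem hmem]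
          exact Or.inr h''
      · simp only [Walk.support_cons, Walk.support_nil, List.mem_cons, List.mem_singleton] at h'
        rcases h' with rfl | rfl | h'
        · exact Or.inr hmem
        · exact Or.inr haself
        · simp at h'

end CompSet

section PD
variable {V : Type} {T : SimpleGraph V} {x v c c' : V} {C C' : Set V} {w : ℕ}

def IsPD (T : SimpleGraph V) (C : Set V) (w : ℕ) (L : List (Finset V)) : Prop :=
  (∀ B ∈ L, ↑B ⊆ C ∧ B.card ≤ w + 1) ∧
  (∀ v ∈ C, ∃ i, v ∈ L.getD i ∅) ∧
  (∀ u v, u ∈ C → v ∈ C → T.Adj u v → ∃ i, u ∈ L.getD i ∅ ∧ v ∈ L.getD i ∅) ∧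
  (∀ x i j k, i ≤ j → j ≤ k → x ∈ L.getD i ∅ → x ∈ L.getD k ∅ → x ∈ L.getD j ∅)

def PD (T : SimpleGraph V) (C : Set V) (w : ℕ) : Prop := ∃ L, IsPD T C w L

lemma lt_length_of_mem_getD {L : List (Finset V)} {i : ℕ} (h : v ∈ L.getD i ∅) :
    i < L.length := by
  by_contra h'
  rw [List.getD_eq_default _ _ (le_of_not_gt h')] at h
  simp at h

lemma getD_mem_of_lt {L : List (Finset V)} {i : ℕ} (h : i < L.length) : L.getD i ∅ ∈ L := by
  rw [List.getD_eq_getElem _ _ h]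
  exact List.getElem_mem h

lemma IsPD.mem_of_mem_getD {L : List (Finset V)} {i : ℕ} (h : IsPD T C w L)
    (hv : v ∈ L.getD i ∅) : v ∈ C :=
  (h.1 _ (getD_mem_of_lt (lt_length_of_mem_getD hv))).1 hv

lemma getD_append_eq (L1 L2 : List (Finset V)) (i : ℕ) :
    (L1 ++ L2).getD i ∅ = if i < L1.length then L1.getD i ∅ else L2.getD (i - L1.length) ∅ := by
  split
  · exact List.getD_append _ _ _ _ (by assumption)
  · exact List.getD_append_right _ _ _ _ (le_of_not_gt (by assumption))

lemma getD_map_eq {f : Finset V → Finset V} {L : List (Finset V)} {i : ℕ}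
    (h : i < L.length) : (L.map f).getD i ∅ = f (L.getD i ∅) := by
  rw [List.getD_eq_getElem _ _ (by simpa using h), List.getD_eq_getElem _ _ h]
  simp

/-- Disjoint union of decompositions with no cross edges. -/
lemma IsPD.disjUnion {L1 L2 : List (Finset V)}
    (h1 : IsPD T C w L1) (h2 : IsPD T C' w L2)
    (hd : ∀ v, v ∈ C → v ∈ C' → False)
    (he : ∀ u v, u ∈ C → v ∈ C' → ¬ T.Adj u v) :
    IsPD T (C ∪ C') w (L1 ++ L2) := by
  obtain ⟨hb1, hc1, he1, hi1⟩ := h1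
  obtain ⟨hb2, hc2, he2, hi2⟩ := h2
  have hs1 : ∀ i x, x ∈ L1.getD i ∅ → x ∈ C := fun i x hx =>
    (hb1 _ (getD_mem_of_lt (lt_length_of_mem_getD hx))).1 hx
  have hs2 : ∀ i x, x ∈ L2.getD i ∅ → x ∈ C' := fun i x hx =>
    (hb2 _ (getD_mem_of_lt (lt_length_of_mem_getD hx))).1 hx
  refine ⟨?_, ?_, ?_, ?_⟩
  · intro B hB
    rcases List.mem_append.1 hB with h | h
    · exact ⟨(hb1 B h).1.trans Set.subset_union_left, (hb1 B h).2⟩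
    · exact ⟨(hb2 B h).1.trans Set.subset_union_right, (hb2 B h).2⟩
  · intro u hu
    rcases hu with hu | hu
    · obtain ⟨i, hi⟩ := hc1 u hu
      exact ⟨i, by rw [getD_append_eq, if_pos (lt_length_of_mem_getD hi)]; exact hi⟩
    · obtain ⟨i, hi⟩ := hc2 u hu
      refine ⟨L1.length + i, ?_⟩
      rw [getD_append_eq, if_neg (by omega)]
      simpa using hi
  · intro u u' hu hu' hadj
    rcases hu with hu | hu <;> rcases hu' with hu' | hu'
    · obtain ⟨i, hi, hi'⟩ := he1 u u' hu hu' hadj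
      refine ⟨i, ?_, ?_⟩ <;> rw [getD_append_eq, if_pos (lt_length_of_mem_getD hi)] <;>
        [exact hi; exact hi']
    · exact absurd hadj (he u u' hu hu')
    · exact absurd hadj.symm (he u' u hu' hu)
    · obtain ⟨i, hi, hi'⟩ := he2 u u' hu hu' hadj
      refine ⟨L1.length + i, ?_, ?_⟩ <;> rw [getD_append_eq, if_neg (by omega)] <;>
        simp only [Nat.add_sub_cancel_left] <;> [exact hi; exact hi']
  · intro a i j k hij hjk hai hak
    rw [getD_append_eq] at hai hak ⊢
    by_cases hi : i < L1.length <;> by_cases hk : k < L1.length <;>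
      simp only [if_pos, if_neg, hi, hk] at hai hak
    · have hj : j < L1.length := lt_of_le_of_lt hjk hk
      rw [if_pos hj]
      exact hi1 a i j k hij hjk hai hak
    · exact absurd (hd a (hs1 _ _ hai) (hs2 _ _ hak)) (fun h => h)
    · omega
    · have hj : ¬ j < L1.length := by omega
      rw [if_neg hj]
      exact hi2 a _ _ _ (by omega) (by omega) hai hak

/-- Add a new vertex to all bags, plus a new initial bag `{x}`. -/
lemma IsPD.consInsert [DecidableEq V] {L : List (Finset V)} (h : IsPD T C w L) (hx : x ∉ C) :
    IsPD T (insert x C) (w + 1) (({x} : Finset V) :: L.map (insert x)) := by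
  classical
  obtain ⟨hb, hc, he, hi⟩ := h
  have hmem : ∀ (i : ℕ) (v : V), v ∈ (({x} : Finset V) :: L.map (insert x)).getD i ∅ ↔
      (i = 0 ∧ v = x) ∨ (∃ i', i = i' + 1 ∧ i' < L.length ∧ v ∈ insert x (L.getD i' ∅)) := by
    intro i v
    cases i with
    | zero => simp
    | succ i' =>
      simp only [List.getD_cons_succ]
      constructor
      · intro hv
        have hlt : i' < L.length := by
          have := lt_length_of_mem_getD hv
          simpa using this
        rw [getD_map_eq hlt] at hv
        exact Or.inr ⟨i', rfl, hlt, hv⟩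
      · rintro (⟨h0, -⟩ | ⟨i'', hi'', hlt, hv⟩)
        · omega
        · have : i'' = i' := by omega
          subst this
          rw [getD_map_eq hlt]
          exact hv
  refine ⟨?_, ?_, ?_, ?_⟩
  · intro B hB
    rcases List.mem_cons.1 hB with rfl | hB
    · constructor
      · intro a ha
        simp only [Finset.coe_singleton, Set.mem_singleton_iff] at ha
        exact ha ▸ Set.mem_insert _ _
      · have : ({x} : Finset V).card = 1 := Finset.card_singleton x
        omega
    · obtain ⟨B', hB', rfl⟩ := List.mem_map.1 hB
      constructor
      · intro a ha
        simp only [Finset.coe_insert, Set.mem_insert_iff] at ha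
        rcases ha with rfl | ha
        · exact Set.mem_insert _ _
        · exact Set.mem_insert_of_mem _ ((hb B' hB').1 ha)
      · calc (insert x B').card ≤ B'.card + 1 := Finset.card_insert_le _ _
          _ ≤ w + 1 + 1 := by have := (hb B' hB').2; omega
  · intro u hu
    rcases Set.mem_insert_iff.1 hu with rfl | hu
    · exact ⟨0, by simp⟩
    · obtain ⟨i, hi⟩ := hc u hu
      exact ⟨i + 1, (hmem _ _).2 (Or.inr ⟨i, rfl, lt_length_of_mem_getD hi,
        Finset.mem_insert_of_mem hi⟩)⟩
  · intro u u' hu hu' hadj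
    rcases Set.mem_insert_iff.1 hu with hue | huC
    · rcases Set.mem_insert_iff.1 hu' with hue' | huC'
      · exact absurd (hue.trans hue'.symm) hadj.ne
      · obtain ⟨i, hi⟩ := hc u' huC'
        exact ⟨i + 1, (hmem _ _).2 (Or.inr ⟨i, rfl, lt_length_of_mem_getD hi,
          hue ▸ Finset.mem_insert_self _ _⟩), (hmem _ _).2 (Or.inr ⟨i, rfl,
          lt_length_of_mem_getD hi, Finset.mem_insert_of_mem hi⟩)⟩
    · rcases Set.mem_insert_iff.1 hu' with hue' | huC'
      · obtain ⟨i, hi⟩ := hc u huC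
        exact ⟨i + 1, (hmem _ _).2 (Or.inr ⟨i, rfl, lt_length_of_mem_getD hi,
          Finset.mem_insert_of_mem hi⟩), (hmem _ _).2 (Or.inr ⟨i, rfl,
          lt_length_of_mem_getD hi, hue' ▸ Finset.mem_insert_self _ _⟩)⟩
      · obtain ⟨i, hi, hi'⟩ := he u u' huC huC' hadj
        exact ⟨i + 1, (hmem _ _).2 (Or.inr ⟨i, rfl, lt_length_of_mem_getD hi,
          Finset.mem_insert_of_mem hi⟩), (hmem _ _).2 (Or.inr ⟨i, rfl, lt_length_of_mem_getD hi',
          Finset.mem_insert_of_mem hi'⟩)⟩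
  · intro a i j k hij hjk hai hak
    rcases (hmem _ _).1 hai with ⟨rfl, rfl⟩ | ⟨i', rfl, hi'len, hai'⟩
    · -- a = x : x is in every in-range bag
      rcases (hmem _ _).1 hak with ⟨rfl, -⟩ | ⟨k', rfl, hk'len, -⟩
      · have : j = 0 := by omega
        subst this
        simp
      · rcases Nat.eq_zero_or_pos j with rfl | hj
        · simp
        · obtain ⟨j', rfl⟩ := Nat.exists_eq_add_of_le hj
          exact (hmem _ _).2 (Or.inr ⟨j', by omega, by omega, Finset.mem_insert_self _ _⟩)
    · have hxa : a ∈ L.getD i' ∅ ∨ a = x := by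
        rcases Finset.mem_insert.1 hai' with rfl | h
        · exact Or.inr rfl
        · exact Or.inl h
      rcases hxa with hxa | rfl
      · -- a ∈ C, so a ≠ x, a only in mapped bags
        have haC : a ∈ C := (hb _ (getD_mem_of_lt (lt_length_of_mem_getD hxa))).1 hxa
        have hanex : a ≠ x := fun h => hx (h ▸ haC)
        rcases (hmem _ _).1 hak with ⟨-, rfl⟩ | ⟨k', rfl, hk'len, hak'⟩
        · exact absurd rfl hanex
        · have hak'' : a ∈ L.getD k' ∅ := by
            rcases Finset.mem_insert.1 hak' with rfl | h
            · exact absurd rfl hanex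
            · exact h
          obtain ⟨j', rfl⟩ : ∃ j', j = j' + 1 := ⟨j - 1, by omega⟩
          exact (hmem _ _).2 (Or.inr ⟨j', rfl, by omega,
            Finset.mem_insert_of_mem (hi a i' j' k' (by omega) (by omega) hxa hak'')⟩)
      · -- a = x again
        rcases (hmem _ _).1 hak with ⟨rfl, -⟩ | ⟨k', rfl, hk'len, -⟩
        · omega
        · rcases Nat.eq_zero_or_pos j with rfl | hj
          · simp
          · obtain ⟨j', rfl⟩ := Nat.exists_eq_add_of_le hj
            exact (hmem _ _).2 (Or.inr ⟨j', by omega, by omega, Finset.mem_insert_self _ _⟩)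

end PD

section PD2
variable {V : Type} {T : SimpleGraph V} {x v c c' : V} {C C' : Set V} {w : ℕ}

/-- Glue an anchored decomposition after a decomposition all of whose bags contain `c`,
linked by the bag `{c, c'}`. -/
lemma IsPD.link [DecidableEq V] {L1 L2 : List (Finset V)} {B2 : Finset V}
    (h1 : IsPD T C w L1) (h2 : IsPD T C' w (B2 :: L2))
    (hall : ∀ B ∈ L1, c ∈ B) (hne : L1 ≠ [])
    (hc2 : c' ∈ B2)
    (hd : ∀ v, v ∈ C → v ∈ C' → False)
    (hcC : c ∈ C) (hc'C : c' ∈ C')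
    (hcross : ∀ u u', T.Adj u u' → u ∈ C → u' ∈ C' → u = c ∧ u' = c')
    (hw : 1 ≤ w) :
    IsPD T (C ∪ C') w (L1 ++ ({c, c'} : Finset V) :: B2 :: L2) := by
  obtain ⟨hb1, hcov1, he1, hi1⟩ := h1
  obtain ⟨hb2, hcov2, he2, hi2⟩ := h2
  set n1 := L1.length with hn1
  have hcc' : c ≠ c' := fun h => hd c hcC (h ▸ hc'C)
  have hs1 : ∀ i a, a ∈ L1.getD i ∅ → a ∈ C := fun i a ha =>
    (hb1 _ (getD_mem_of_lt (lt_length_of_mem_getD ha))).1 ha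
  have hs2 : ∀ i a, a ∈ (B2 :: L2).getD i ∅ → a ∈ C' := fun i a ha =>
    (hb2 _ (getD_mem_of_lt (lt_length_of_mem_getD ha))).1 ha
  have hget : ∀ i, (L1 ++ ({c, c'} : Finset V) :: B2 :: L2).getD i ∅ =
      if i < n1 then L1.getD i ∅ else if i = n1 then {c, c'} else
        (B2 :: L2).getD (i - n1 - 1) ∅ := by
    intro i
    rw [getD_append_eq]
    split
    · rfl
    · rename_i h
      rcases Nat.lt_or_ge n1 i with h' | h'
      · rw [if_neg (by omega)]
        have : i - n1 = (i - n1 - 1) + 1 := by omega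
        rw [this]
        simp
      · have : i = n1 := by omega
        subst this
        rw [if_pos rfl]
        simp [hn1]
  constructor
  · intro B hB
    rcases List.mem_append.1 hB with h | h
    · exact ⟨(hb1 B h).1.trans Set.subset_union_left, (hb1 B h).2⟩
    · rcases List.mem_cons.1 h with rfl | h
      · constructor
        · intro a ha
          simp only [Finset.coe_insert, Finset.coe_singleton, Set.mem_insert_iff,
            Set.mem_singleton_iff] at ha
          rcases ha with rfl | rfl
          · exact Or.inl hcC
          · exact Or.inr hc'C
        · have : ({c, c'} : Finset V).card ≤ 2 := Finset.card_insert_le _ _ |>.trans (by simp)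
          omega
      · exact ⟨(hb2 B h).1.trans Set.subset_union_right, (hb2 B h).2⟩
  refine ⟨?_, ?_, ?_⟩
  · intro u hu
    rcases hu with hu | hu
    · obtain ⟨i, hi⟩ := hcov1 u hu
      refine ⟨i, ?_⟩
      rw [hget, if_pos (lt_length_of_mem_getD hi)]
      exact hi
    · obtain ⟨i, hi⟩ := hcov2 u hu
      refine ⟨n1 + 1 + i, ?_⟩
      rw [hget, if_neg (by omega), if_neg (by omega)]
      have : n1 + 1 + i - n1 - 1 = i := by omega
      rw [this]
      exact hi
  · intro u u' hu hu' hadj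
    rcases hu with hu | hu
    · rcases hu' with hu' | hu'
      · obtain ⟨i, hi, hi'⟩ := he1 u u' hu hu' hadj
        have hlt := lt_length_of_mem_getD hi
        exact ⟨i, by rw [hget, if_pos hlt]; exact hi, by rw [hget, if_pos hlt]; exact hi'⟩
      · obtain ⟨rfl, rfl⟩ := hcross u u' hadj hu hu'
        refine ⟨n1, ?_, ?_⟩ <;> rw [hget, if_neg (by omega), if_pos rfl]
        · exact Finset.mem_insert_self _ _
        · exact Finset.mem_insert_of_mem (Finset.mem_singleton_self _)
    · rcases hu' with hu' | hu'
      · obtain ⟨rfl, rfl⟩ := hcross u' u hadj.symm hu' hu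
        refine ⟨n1, ?_, ?_⟩ <;> rw [hget, if_neg (by omega), if_pos rfl]
        · exact Finset.mem_insert_of_mem (Finset.mem_singleton_self _)
        · exact Finset.mem_insert_self _ _
      · obtain ⟨i, hi, hi'⟩ := he2 u u' hu hu' hadj
        refine ⟨n1 + 1 + i, ?_, ?_⟩ <;>
          rw [hget, if_neg (by omega), if_neg (by omega)] <;>
          · have : n1 + 1 + i - n1 - 1 = i := by omega
            rw [this]
            first | exact hi | exact hi'
  · intro a i j k hij hjk hai hak
    rw [hget] at hai hak ⊢
    have hmemcc : ∀ b : V, b ∈ ({c, c'} : Finset V) → b = c ∨ b = c' := by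
      intro b hb
      rcases Finset.mem_insert.1 hb with h | h
      · exact Or.inl h
      · exact Or.inr (Finset.mem_singleton.1 h)
    by_cases hi : i < n1 <;> by_cases hk : k < n1
    · -- both in L1
      rw [if_pos hi] at hai
      rw [if_pos hk] at hak
      rw [if_pos (by omega)]
      exact hi1 a i j k hij hjk hai hak
    · rw [if_pos hi] at hai
      have haC : a ∈ C := hs1 _ _ hai
      rw [if_neg hk] at hak
      by_cases hkn : k = n1
      · -- a ∈ {c,c'} and a ∈ C so a = c
        rw [if_pos hkn] at hak
        have : a = c := by
          rcases hmemcc a hak with h | h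
          · exact h
          · exact absurd haC (fun hC => hd a (h ▸ hC) (h ▸ hc'C))
        subst this
        by_cases hj : j < n1
        · rw [if_pos hj]
          have := hall _ (getD_mem_of_lt hj)
          exact this
        · have : j = n1 := by omega
          rw [if_neg hj, if_pos this]
          exact Finset.mem_insert_self _ _
      · rw [if_neg hkn] at hak
        exact absurd (hd a haC (hs2 _ _ hak)) (fun h => h)
    · omega
    · -- i ≥ n1
      rw [if_neg hi] at hai
      rw [if_neg hk] at hak
      by_cases hin : i = n1
      · rw [if_pos hin] at hai
        by_cases hkn : k = n1
        · have : j = n1 := by omega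
          rw [if_neg (by omega), if_pos this]
          rw [if_pos hkn] at hak
          exact hai
        · -- a ∈ {c,c'} and a ∈ C' (at k) so a = c'
          rw [if_neg hkn] at hak
          have haC' : a ∈ C' := hs2 _ _ hak
          have : a = c' := by
            rcases hmemcc a hai with h | h
            · exact absurd haC' (fun hC => hd a (h ▸ hcC) hC)
            · exact h
          subst this
          by_cases hjn : j = n1
          · rw [if_neg (by omega), if_pos hjn]
            exact hai
          · rw [if_neg (by omega), if_neg hjn]
            have h0 : a ∈ (B2 :: L2).getD 0 ∅ := by simpa using hc2
            exact hi2 a 0 (j - n1 - 1) (k - n1 - 1) (by omega) (by omega) h0 hak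
      · rw [if_neg hin] at hai
        rw [if_neg (by omega : ¬ k = n1)] at hak
        rw [if_neg (by omega), if_neg (by omega)]
        exact hi2 a (i - n1 - 1) (j - n1 - 1) (k - n1 - 1) (by omega) (by omega) hai hak

/-- Restriction of a decomposition to a subset. -/
lemma IsPD.restrict {L : List (Finset V)} [DecidablePred (· ∈ C')] (h : IsPD T C w L)
    (hsub : C' ⊆ C) :
    IsPD T C' w (L.map (fun B => B.filter (fun a => a ∈ C'))) := by
  obtain ⟨hb, hcov, he, hi⟩ := h
  have hmem : ∀ (i : ℕ) (a : V), a ∈ (L.map (fun B => B.filter (fun a => a ∈ C'))).getD i ∅ ↔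
      (a ∈ L.getD i ∅ ∧ a ∈ C') := by
    intro i a
    constructor
    · intro ha
      have hlt : i < L.length := by
        have := lt_length_of_mem_getD ha
        simpa using this
      rw [getD_map_eq hlt] at ha
      exact ⟨(Finset.mem_filter.1 ha).1, (Finset.mem_filter.1 ha).2⟩
    · rintro ⟨ha, haC⟩
      rw [getD_map_eq (lt_length_of_mem_getD ha)]
      exact Finset.mem_filter.2 ⟨ha, haC⟩
  refine ⟨?_, ?_, ?_, ?_⟩
  · intro B hB
    obtain ⟨B', hB', rfl⟩ := List.mem_map.1 hB
    constructor
    · intro a ha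
      simp only [Finset.coe_filter, Set.mem_setOf_eq] at ha
      exact ha.2
    · exact (Finset.card_filter_le _ _).trans (hb B' hB').2
  · intro u hu
    obtain ⟨i, hi'⟩ := hcov u (hsub hu)
    exact ⟨i, (hmem _ _).2 ⟨hi', hu⟩⟩
  · intro u u' hu hu' hadj
    obtain ⟨i, h1, h2⟩ := he u u' (hsub hu) (hsub hu') hadj
    exact ⟨i, (hmem _ _).2 ⟨h1, hu⟩, (hmem _ _).2 ⟨h2, hu'⟩⟩
  · intro a i j k hij hjk hai hak
    obtain ⟨hai', haC⟩ := (hmem _ _).1 hai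
    obtain ⟨hak', -⟩ := (hmem _ _).1 hak
    exact (hmem _ _).2 ⟨hi a i j k hij hjk hai' hak', haC⟩

lemma PD.mono (h : PD T C w) (hsub : C' ⊆ C) : PD T C' w := by
  classical
  obtain ⟨L, hL⟩ := h
  exact ⟨_, hL.restrict hsub⟩

lemma PD.anti_not (h : ¬ PD T C w) (hsub : C ⊆ C') : ¬ PD T C' w :=
  fun h' => h (h'.mono hsub)

/-- A decomposition of a bigger width. -/
lemma IsPD.relax {L : List (Finset V)} (h : IsPD T C w L) {w' : ℕ} (hw : w ≤ w') :
    IsPD T C w' L := by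
  obtain ⟨hb, hcov, he, hi⟩ := h
  exact ⟨fun B hB => ⟨(hb B hB).1, (hb B hB).2.trans (by omega)⟩, hcov, he, hi⟩

/-- The hitting lemma: a bag index between two indices meeting a connected set
must meet the walk between them. -/
lemma IsPD.hit {L : List (Finset V)} (h : IsPD T Set.univ w L) {a b : V}
    (wab : T.Walk a b) : ∀ p q s : ℕ, p ≤ q → q ≤ s →
    a ∈ L.getD p ∅ → b ∈ L.getD s ∅ →
    ∃ v ∈ wab.support, v ∈ L.getD q ∅ := by
  obtain ⟨hbags, hcov, he, hi⟩ := h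
  induction wab with
  | nil =>
    intro p q s hpq hqs ha hb
    exact ⟨_, by simp, hi _ p q s hpq hqs ha hb⟩
  | @cons a a' b hadj pw ih =>
    intro p q s hpq hqs ha hb
    by_cases haq : a ∈ L.getD q ∅
    · exact ⟨a, by simp, haq⟩
    · obtain ⟨t, ht, ht'⟩ := he a a' (Set.mem_univ a) (Set.mem_univ a') hadj
      by_cases htq : q ≤ t
      · exact absurd (hi a p q t hpq htq ha ht) haq
      · obtain ⟨v, hv, hv'⟩ := ih t q s (by omega) hqs ht' hb
        exact ⟨v, by simp [hv], hv'⟩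

/-- If `C` has no width-`w - 1` decomposition but the whole graph has a width-`w` one,
then some bag is entirely inside `C`. -/
lemma exists_full_bag {L : List (Finset V)} (h : IsPD T Set.univ w L) (hw : 1 ≤ w)
    (hC : ¬ PD T C (w - 1)) :
    ∃ i, (L.getD i ∅).Nonempty ∧ ↑(L.getD i ∅) ⊆ C := by
  classical
  by_contra hcon
  push_neg at hcon
  apply hC
  refine ⟨L.map (fun B => B.filter (fun a => a ∈ C)), ?_⟩
  have hres := h.restrict (C' := C) (Set.subset_univ C)
  obtain ⟨hb, hcov, he, hi⟩ := hres
  refine ⟨?_, hcov, he, hi⟩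
  intro B hB
  refine ⟨(hb B hB).1, ?_⟩
  obtain ⟨B', hB', rfl⟩ := List.mem_map.1 hB
  obtain ⟨⟨i, hilt⟩, hBi⟩ := List.mem_iff_get.1 hB'
  rw [← List.getD_eq_get L ∅ ⟨i, hilt⟩] at hBi
  subst hBi
  by_cases hfull : ↑(L.getD i ∅) ⊆ C
  · rcases Finset.eq_empty_or_nonempty (L.getD i ∅) with hemp | hne
    · rw [hemp]
      simp
    · exact absurd hfull (hcon i hne)
  · -- the filter is a strict subset so its card is at most w
    have hcard : (L.getD i ∅).card ≤ w + 1 := (h.1 _ (getD_mem_of_lt hilt)).2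
    have hssub : (L.getD i ∅).filter (fun a => a ∈ C) ⊂ L.getD i ∅ := by
      refine Finset.ssubset_iff_of_subset (Finset.filter_subset _ _) |>.2 ?_
      rw [Set.not_subset] at hfull
      obtain ⟨a, ha, haC⟩ := hfull
      exact ⟨a, ha, fun hmem => haC (Finset.mem_filter.1 hmem).2⟩
    have := Finset.card_lt_card hssub
    show ((L.getD i ∅).filter (fun a => a ∈ C)).card ≤ w - 1 + 1
    omega

end PD2

section Bridge
variable {V : Type} [Fintype V] {T : SimpleGraph V} {C : Set V} {w k : ℕ}

/-- the trivial one-bag path decomposition -/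
def trivPathDecomp (G : SimpleGraph V) : PathDecomp G where
  m := 1
  bags := fun _ => Finset.univ
  cover := fun v => ⟨0, Finset.mem_univ v⟩
  edgeCover := fun u v _ => ⟨0, Finset.mem_univ u, Finset.mem_univ v⟩
  interval := fun v _ j _ _ _ _ _ => Finset.mem_univ v

lemma pathwidth_set_nonempty (G : SimpleGraph V) :
    { w | ∃ D : PathDecomp G, ∀ i, (D.bags i).card ≤ w + 1 }.Nonempty :=
  ⟨Fintype.card V, trivPathDecomp G, fun _ => by
    simp only [trivPathDecomp, Finset.card_univ]; omega⟩

lemma pathwidth_le_iff {G : SimpleGraph V} :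
    pathwidth G ≤ w ↔ ∃ D : PathDecomp G, ∀ i, (D.bags i).card ≤ w + 1 := by
  unfold pathwidth
  constructor
  · intro h
    obtain ⟨D, hD⟩ := Nat.sInf_mem (pathwidth_set_nonempty G)
    exact ⟨D, fun i => (hD i).trans (by omega)⟩
  · intro ⟨D, hD⟩
    exact Nat.sInf_le ⟨D, hD⟩

lemma getD_ofFn {m : ℕ} (f : Fin m → Finset V) {i : ℕ} (h : i < m) :
    (List.ofFn f).getD i ∅ = f ⟨i, h⟩ := by
  rw [List.getD_eq_getElem _ _ (by simpa using h)]
  simp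

/-- Bridge for the ambient graph. -/
lemma pathwidth_le_iff_PD : pathwidth T ≤ w ↔ PD T Set.univ w := by
  rw [pathwidth_le_iff]
  constructor
  · rintro ⟨D, hD⟩
    refine ⟨List.ofFn D.bags, ?_, ?_, ?_, ?_⟩
    · intro B hB
      obtain ⟨i, rfl⟩ := List.mem_ofFn.1 hB
      exact ⟨Set.subset_univ _, hD i⟩
    · intro v _
      obtain ⟨i, hi⟩ := D.cover v
      exact ⟨i, by rw [getD_ofFn D.bags i.isLt]; simpa using hi⟩
    · intro u v _ _ hadj
      obtain ⟨i, hi, hi'⟩ := D.edgeCover hadj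
      refine ⟨i, ?_, ?_⟩ <;> rw [getD_ofFn D.bags i.isLt] <;> simpa
    · intro a i j k hij hjk hai hak
      have hk : k < D.m := by have := lt_length_of_mem_getD hak; simpa using this
      have hj : j < D.m := by omega
      have hi : i < D.m := by omega
      rw [getD_ofFn D.bags hi] at hai
      rw [getD_ofFn D.bags hk] at hak
      rw [getD_ofFn D.bags hj]
      exact D.interval a ⟨i, hi⟩ ⟨j, hj⟩ ⟨k, hk⟩ hij hjk hai hak
  · rintro ⟨L, hb, hcov, he, hi⟩
    refine ⟨⟨L.length, fun i => L.get i, ?_, ?_, ?_⟩, ?_⟩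
    · intro v
      obtain ⟨i, hi'⟩ := hcov v (Set.mem_univ v)
      have hlt := lt_length_of_mem_getD hi'
      exact ⟨⟨i, hlt⟩, by rwa [List.getD_eq_get _ _ ⟨i, hlt⟩] at hi'⟩
    · intro u v hadj
      obtain ⟨i, hi', hi''⟩ := he u v (Set.mem_univ u) (Set.mem_univ v) hadj
      have hlt := lt_length_of_mem_getD hi'
      exact ⟨⟨i, hlt⟩, by rwa [List.getD_eq_get _ _ ⟨i, hlt⟩] at hi',
        by rwa [List.getD_eq_get _ _ ⟨i, hlt⟩] at hi''⟩
    · intro v i j k hij hjk hvi hvk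
      have h1 : v ∈ L.getD i.1 ∅ := by rwa [List.getD_eq_get _ _ i]
      have h2 : v ∈ L.getD k.1 ∅ := by rwa [List.getD_eq_get _ _ k]
      have := hi v i.1 j.1 k.1 hij hjk h1 h2
      rwa [List.getD_eq_get _ _ j] at this
    · intro i
      exact (hb _ (L.get_mem i)).2

/-- Bridge for induced subgraphs. -/
lemma pathwidth_induce_le_iff_PD : pathwidth (SimpleGraph.induce C T) ≤ w ↔ PD T C w := by
  classical
  rw [pathwidth_le_iff]
  constructor
  · rintro ⟨D, hD⟩
    set emb : ↥C ↪ V := Function.Embedding.subtype (· ∈ C) with hemb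
    refine ⟨List.ofFn (fun i => (D.bags i).map emb), ?_, ?_, ?_, ?_⟩
    · intro B hB
      obtain ⟨i, rfl⟩ := List.mem_ofFn.1 hB
      constructor
      · intro a ha
        simp only [Finset.coe_map, Set.mem_image] at ha
        obtain ⟨u, -, rfl⟩ := ha
        exact u.2
      · rw [Finset.card_map]
        exact hD i
    · intro v hv
      obtain ⟨i, hi⟩ := D.cover ⟨v, hv⟩
      refine ⟨i, ?_⟩
      rw [getD_ofFn _ i.isLt]
      exact Finset.mem_map.2 ⟨⟨v, hv⟩, hi, rfl⟩
    · intro u v hu hv hadj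
      have : (SimpleGraph.induce C T).Adj ⟨u, hu⟩ ⟨v, hv⟩ := by simpa using hadj
      obtain ⟨i, hi, hi'⟩ := D.edgeCover this
      exact ⟨i, by rw [getD_ofFn _ i.isLt]; exact Finset.mem_map.2 ⟨⟨u, hu⟩, hi, rfl⟩,
        by rw [getD_ofFn _ i.isLt]; exact Finset.mem_map.2 ⟨⟨v, hv⟩, hi', rfl⟩⟩
    · intro a i j k hij hjk hai hak
      have hk : k < D.m := by have := lt_length_of_mem_getD hak; simpa using this
      have hj : j < D.m := by omega
      have hi : i < D.m := by omega
      rw [getD_ofFn _ hi] at hai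
      rw [getD_ofFn _ hk] at hak
      rw [getD_ofFn _ hj]
      obtain ⟨ua, hua, hua2⟩ := Finset.mem_map.1 hai
      obtain ⟨ua', hua', heq⟩ := Finset.mem_map.1 hak
      have hee : ua' = ua := emb.injective (by rw [heq, hua2])
      subst hee
      exact Finset.mem_map.2 ⟨ua', D.interval ua' ⟨i, hi⟩ ⟨j, hj⟩ ⟨k, hk⟩ hij hjk hua hua', hua2⟩
  · rintro ⟨L, hb, hcov, he, hi⟩
    refine ⟨⟨L.length, fun i => (L.get i).subtype (· ∈ C), ?_, ?_, ?_⟩, ?_⟩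
    · intro v
      obtain ⟨i, hi'⟩ := hcov v.1 v.2
      have hlt := lt_length_of_mem_getD hi'
      rw [List.getD_eq_get _ _ ⟨i, hlt⟩] at hi'
      exact ⟨⟨i, hlt⟩, Finset.mem_subtype.2 hi'⟩
    · intro u v hadj
      have hadj' : T.Adj u.1 v.1 := by simpa using hadj
      obtain ⟨i, hi', hi''⟩ := he u.1 v.1 u.2 v.2 hadj'
      have hlt := lt_length_of_mem_getD hi'
      rw [List.getD_eq_get _ _ ⟨i, hlt⟩] at hi' hi''
      exact ⟨⟨i, hlt⟩, Finset.mem_subtype.2 hi', Finset.mem_subtype.2 hi''⟩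
    · intro v i j k hij hjk hvi hvk
      rw [Finset.mem_subtype] at hvi hvk
      have h1 : v.1 ∈ L.getD i.1 ∅ := by rwa [List.getD_eq_get _ _ i]
      have h2 : v.1 ∈ L.getD k.1 ∅ := by rwa [List.getD_eq_get _ _ k]
      have := hi v.1 i.1 j.1 k.1 hij hjk h1 h2
      rw [List.getD_eq_get _ _ j] at this
      exact Finset.mem_subtype.2 this
    · intro i
      calc ((L.get i).subtype (· ∈ C)).card = ((L.get i).filter (· ∈ C)).card :=
            Finset.card_subtype _ _
        _ ≤ (L.get i).card := Finset.card_filter_le _ _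
        _ ≤ w + 1 := (hb _ (L.get_mem i)).2

lemma le_pathwidth_induce_iff (hk : 1 ≤ k) :
    k ≤ pathwidth (SimpleGraph.induce C T) ↔ ¬ PD T C (k - 1) := by
  rw [← pathwidth_induce_le_iff_PD (T := T)]
  omega

end Bridge

section Lower
variable {V : Type} {T : SimpleGraph V} {r : ℕ}

lemma clash_ordered {L : List (Finset V)} (hL : IsPD T Set.univ r L) {x ya yb ua : V}
    {ia ib ma : ℕ}
    (hne : compSet T {x} ya ≠ compSet T {x} yb)
    (hbaga : (L.getD ia ∅).Nonempty) (hsa : ↑(L.getD ia ∅) ⊆ compSet T {x} ya)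
    (hsb : ↑(L.getD ib ∅) ⊆ compSet T {x} yb)
    (hua : ua ∈ compSet T {x} ya) (huma : ua ∈ L.getD ma ∅)
    (horder : (ia ≤ ib ∧ ib ≤ ma) ∨ (ma ≤ ib ∧ ib ≤ ia)) : False := by
  obtain ⟨z, hz⟩ := hbaga
  have hzCa : z ∈ compSet T {x} ya := hsa hz
  have heqa : compSet T {x} ya = compSet T {x} z := compSet_eq_of_mem hzCa
  have huaz : ua ∈ compSet T {x} z := heqa ▸ hua
  obtain ⟨w, hw⟩ := huaz
  have hsup : ∀ v ∈ w.support, v ∈ compSet T {x} ya := by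
    intro v hv
    rw [heqa]
    exact mem_compSet_of_walk w hw hv
  have final : ∀ v, v ∈ compSet T {x} ya → v ∈ L.getD ib ∅ → False := by
    intro v hva hvb
    have hvb' : v ∈ compSet T {x} yb := hsb hvb
    exact hne ((compSet_eq_of_mem hva).trans (compSet_eq_of_mem hvb').symm)
  rcases horder with ⟨h1, h2⟩ | ⟨h1, h2⟩
  · obtain ⟨v, hvsup, hvb⟩ := hL.hit w ia ib ma h1 h2 hz huma
    exact final v (hsup v hvsup) hvb
  · obtain ⟨v, hvsup, hvb⟩ := hL.hit w.reverse ma ib ia h1 h2 huma hz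
    rw [Walk.support_reverse, List.mem_reverse] at hvsup
    exact final v (hsup v hvsup) hvb

lemma clash_pair {L : List (Finset V)} (hL : IsPD T Set.univ r L) {x ya yb ua ub : V}
    {ia ib ma mb : ℕ}
    (hne : compSet T {x} ya ≠ compSet T {x} yb)
    (hbaga : (L.getD ia ∅).Nonempty) (hsa : ↑(L.getD ia ∅) ⊆ compSet T {x} ya)
    (hbagb : (L.getD ib ∅).Nonempty) (hsb : ↑(L.getD ib ∅) ⊆ compSet T {x} yb)
    (hua : ua ∈ compSet T {x} ya) (hub : ub ∈ compSet T {x} yb)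
    (hxma : x ∈ L.getD ma ∅) (huma : ua ∈ L.getD ma ∅)
    (hxmb : x ∈ L.getD mb ∅) (humb : ub ∈ L.getD mb ∅)
    (hside : ((∀ m, x ∈ L.getD m ∅ → ia < m) ∧ (∀ m, x ∈ L.getD m ∅ → ib < m))
           ∨ ((∀ m, x ∈ L.getD m ∅ → m < ia) ∧ (∀ m, x ∈ L.getD m ∅ → m < ib))) : False := by
  have hineq : ia ≠ ib := by
    intro h
    subst h
    obtain ⟨z, hz⟩ := hbaga
    exact hne ((compSet_eq_of_mem (hsa hz)).trans (compSet_eq_of_mem (hsb hz)).symm)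
  rcases hside with ⟨hla, hlb⟩ | ⟨hra, hrb⟩
  · rcases Nat.lt_or_ge ia ib with h | h
    · exact clash_ordered hL hne hbaga hsa hsb hua huma (Or.inl ⟨le_of_lt h, le_of_lt (hlb ma hxma)⟩)
    · exact clash_ordered hL hne.symm hbagb hsb hsa hub humb
        (Or.inl ⟨by omega, le_of_lt (hla mb hxmb)⟩)
  · rcases Nat.lt_or_ge ia ib with h | h
    · exact clash_ordered hL hne.symm hbagb hsb hsa hub humb
        (Or.inr ⟨le_of_lt (hra mb hxmb), le_of_lt h⟩)
    · exact clash_ordered hL hne hbaga hsa hsb hua huma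
        (Or.inr ⟨le_of_lt (hrb ma hxma), by omega⟩)

lemma side_dichotomy {L : List (Finset V)} (hL : IsPD T Set.univ r L) {x : V} {i : ℕ}
    (hx : x ∉ L.getD i ∅) :
    (∀ m, x ∈ L.getD m ∅ → i < m) ∨ (∀ m, x ∈ L.getD m ∅ → m < i) := by
  by_cases hex : ∃ m, x ∈ L.getD m ∅ ∧ m ≤ i
  · obtain ⟨m, hm, hmi⟩ := hex
    right
    intro m' hm'
    by_contra hcon
    exact hx (hL.2.2.2 x m i m' hmi (by omega) hm hm')
  · push_neg at hex
    left
    intro m hm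
    have := hex m hm
    omega

/-- If some vertex has three distinct heavy components, there is no width-`r`
decomposition of the whole tree. -/
lemma no_three_heavy (hT : T.Connected) {x y1 y2 y3 : V} (hr : 1 ≤ r)
    (h1 : y1 ≠ x) (h2 : y2 ≠ x) (h3 : y3 ≠ x)
    (hne12 : compSet T {x} y1 ≠ compSet T {x} y2)
    (hne13 : compSet T {x} y1 ≠ compSet T {x} y3)
    (hne23 : compSet T {x} y2 ≠ compSet T {x} y3)
    (hh1 : ¬ PD T (compSet T {x} y1) (r - 1))
    (hh2 : ¬ PD T (compSet T {x} y2) (r - 1))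
    (hh3 : ¬ PD T (compSet T {x} y3) (r - 1)) :
    ¬ PD T Set.univ r := by
  rintro ⟨L, hL⟩
  obtain ⟨i1, hbag1, hsub1⟩ := exists_full_bag hL hr hh1
  obtain ⟨i2, hbag2, hsub2⟩ := exists_full_bag hL hr hh2
  obtain ⟨i3, hbag3, hsub3⟩ := exists_full_bag hL hr hh3
  -- neighbors of x in each component
  have hnbr : ∀ y : V, y ≠ x → ∃ u, T.Adj x u ∧ u ∈ compSet T {x} y := by
    intro y hy
    obtain ⟨w⟩ := hT.preconnected y x
    have := exists_adj_mem_compSet (D := ∅) hy w (by simp)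
    simpa [Set.empty_union] using this
  obtain ⟨u1, hu1adj, hu1⟩ := hnbr y1 h1
  obtain ⟨u2, hu2adj, hu2⟩ := hnbr y2 h2
  obtain ⟨u3, hu3adj, hu3⟩ := hnbr y3 h3
  obtain ⟨m1, hxm1, hum1⟩ := hL.2.2.1 x u1 (Set.mem_univ _) (Set.mem_univ _) hu1adj
  obtain ⟨m2, hxm2, hum2⟩ := hL.2.2.1 x u2 (Set.mem_univ _) (Set.mem_univ _) hu2adj
  obtain ⟨m3, hxm3, hum3⟩ := hL.2.2.1 x u3 (Set.mem_univ _) (Set.mem_univ _) hu3adj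
  have hxnot : ∀ (y : V) (i : ℕ), ↑(L.getD i ∅) ⊆ compSet T {x} y → x ∉ L.getD i ∅ := by
    intro y i hsub hmem
    exact not_mem_del_of_mem_compSet (hsub hmem) rfl
  have hs1 := side_dichotomy hL (hxnot y1 i1 hsub1)
  have hs2 := side_dichotomy hL (hxnot y2 i2 hsub2)
  have hs3 := side_dichotomy hL (hxnot y3 i3 hsub3)
  rcases hs1 with hs1 | hs1 <;> rcases hs2 with hs2 | hs2 <;> rcases hs3 with hs3 | hs3
  · exact clash_pair hL hne12 hbag1 hsub1 hbag2 hsub2 hu1 hu2 hxm1 hum1 hxm2 hum2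
      (Or.inl ⟨hs1, hs2⟩)
  · exact clash_pair hL hne12 hbag1 hsub1 hbag2 hsub2 hu1 hu2 hxm1 hum1 hxm2 hum2
      (Or.inl ⟨hs1, hs2⟩)
  · exact clash_pair hL hne13 hbag1 hsub1 hbag3 hsub3 hu1 hu3 hxm1 hum1 hxm3 hum3
      (Or.inl ⟨hs1, hs3⟩)
  · exact clash_pair hL hne23 hbag2 hsub2 hbag3 hsub3 hu2 hu3 hxm2 hum2 hxm3 hum3
      (Or.inr ⟨hs2, hs3⟩)
  · exact clash_pair hL hne23 hbag2 hsub2 hbag3 hsub3 hu2 hu3 hxm2 hum2 hxm3 hum3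
      (Or.inl ⟨hs2, hs3⟩)
  · exact clash_pair hL hne13 hbag1 hsub1 hbag3 hsub3 hu1 hu3 hxm1 hum1 hxm3 hum3
      (Or.inr ⟨hs1, hs3⟩)
  · exact clash_pair hL hne12 hbag1 hsub1 hbag2 hsub2 hu1 hu2 hxm1 hum1 hxm2 hum2
      (Or.inr ⟨hs1, hs2⟩)
  · exact clash_pair hL hne12 hbag1 hsub1 hbag2 hsub2 hu1 hu2 hxm1 hum1 hxm2 hum2
      (Or.inr ⟨hs1, hs2⟩)

lemma exists_three_distinct {α : Type} {s : Set α} (h : 3 ≤ s.ncard) :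
    ∃ a b c, a ∈ s ∧ b ∈ s ∧ c ∈ s ∧ a ≠ b ∧ a ≠ c ∧ b ≠ c := by
  have hfin : s.Finite := Set.finite_of_ncard_ne_zero (by omega)
  obtain ⟨a, ha, b, hb, c, hc, h1, h2, h3⟩ := (Set.two_lt_ncard hfin).1 (by omega)
  exact ⟨a, b, c, ha, hb, hc, h1, h2, h3⟩

end Lower

section Parts
variable {V : Type} [Fintype V] {T : SimpleGraph V}

lemma exists_edge_of_ne {a b : V} (hab : a ≠ b) (w : T.Walk a b) : ∃ u v, T.Adj u v := by
  cases w with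
  | nil => exact absurd rfl hab
  | cons h p => exact ⟨_, _, h⟩

lemma pathwidth_eq_zero_iff (hT : T.IsTree) : pathwidth T = 0 ↔ Fintype.card V = 1 := by
  have hconn := hT.isConnected
  constructor
  · intro h0
    obtain ⟨L, hL⟩ := pathwidth_le_iff_PD.1 (le_of_eq h0)
    have hall : ∀ a b : V, a = b := by
      intro a b
      by_contra hab
      obtain ⟨w⟩ := hconn.preconnected a b
      obtain ⟨u, v, hadj⟩ := exists_edge_of_ne hab w
      obtain ⟨i, hu, hv⟩ := hL.2.2.1 u v (Set.mem_univ _) (Set.mem_univ _) hadj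
      have hcard := (hL.1 _ (getD_mem_of_lt (lt_length_of_mem_getD hu))).2
      have : 1 < (L.getD i ∅).card := Finset.one_lt_card.2 ⟨u, hu, v, hv, hadj.ne⟩
      omega
    have : Nonempty V := hconn.nonempty
    obtain ⟨a⟩ := this
    exact Fintype.card_eq_one_iff.2 ⟨a, fun y => hall y a⟩
  · intro hcard
    have hsub : ∀ a b : V, a = b := by
      intro a b
      have := Fintype.card_le_one_iff.1 (le_of_eq hcard)
      exact this a b
    have hle : pathwidth T ≤ 0 := by
      apply pathwidth_le_iff_PD.2
      refine ⟨[Finset.univ], ?_, ?_, ?_, ?_⟩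
      · intro B hB
        rcases List.mem_singleton.1 hB with rfl
        constructor
        · exact Set.subset_univ _
        · rw [Finset.card_univ, hcard]
      · intro v _
        exact ⟨0, by simp⟩
      · intro u v _ _ hadj
        exact absurd (hsub u v) hadj.ne
      · intro a i j k hij hjk hai hak
        have hk := lt_length_of_mem_getD hak
        simp only [List.length_singleton] at hk
        have : j = 0 := by omega
        have hi : i = 0 := by omega
        subst this
        subst hi
        exact hai
    omega

lemma part3_lemma (hT : T.IsTree) (r : ℕ) (x : V)
    (h : 3 ≤ {C : Set V | (∃ y, y ≠ x ∧ C = compSet T {x} y) ∧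
        r ≤ pathwidth (SimpleGraph.induce C T)}.ncard) :
    r + 1 ≤ pathwidth T := by
  obtain ⟨C1, C2, C3, hC1, hC2, hC3, h12, h13, h23⟩ := exists_three_distinct h
  obtain ⟨⟨z1, hz1, rfl⟩, hpw1⟩ := hC1
  obtain ⟨⟨z2, hz2, rfl⟩, hpw2⟩ := hC2
  obtain ⟨⟨z3, hz3, rfl⟩, hpw3⟩ := hC3
  rcases Nat.eq_zero_or_pos r with rfl | hr
  · by_contra hcon
    push_neg at hcon
    have h0 : pathwidth T = 0 := by omega
    have hcard := (pathwidth_eq_zero_iff hT).1 h0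
    exact hz1 (Fintype.card_le_one_iff.1 (le_of_eq hcard) z1 x)
  · by_contra hcon
    push_neg at hcon
    have hple : pathwidth T ≤ r := by omega
    have hPD := pathwidth_le_iff_PD.1 hple
    exact no_three_heavy hT.isConnected hr hz1 hz2 hz3 h12 h13 h23
      ((le_pathwidth_induce_iff hr).1 hpw1)
      ((le_pathwidth_induce_iff hr).1 hpw2)
      ((le_pathwidth_induce_iff hr).1 hpw3) hPD

lemma part1_forward (hT : T.IsTree) {k : ℕ} (hk : 1 ≤ k) (hpw : pathwidth T ≤ k) (x : V) :
    {C : Set V | (∃ y, y ≠ x ∧ C = compSet T {x} y) ∧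
        k ≤ pathwidth (SimpleGraph.induce C T)}.ncard ≤ 2 := by
  by_contra h
  push_neg at h
  have := part3_lemma hT k x (by omega)
  omega

end Parts

section TreeLemmas
variable {V : Type} {T : SimpleGraph V} {D : Set V}

/-- In an acyclic graph, a branch at `c` contains exactly one neighbor of `c`. -/
lemma unique_branch_neighbor (hT : T.IsAcyclic) {c u z : V}
    (hu : T.Adj c u) (hz : T.Adj c z) (hmem : z ∈ compSet T (D ∪ {c}) u) : z = u := by
  classical
  obtain ⟨w, hw⟩ := hmem
  have hcsup : c ∉ w.bypass.support := by
    intro hc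
    exact (hw c (w.support_bypass_subset hc)) (by simp)
  have hP1 : (Walk.cons hz Walk.nil : T.Walk c z).IsPath := by
    rw [Walk.cons_isPath_iff]
    exact ⟨Walk.IsPath.nil, by simp [hz.ne]⟩
  have hP2 : (Walk.cons hu w.bypass : T.Walk c z).IsPath := by
    rw [Walk.cons_isPath_iff]
    exact ⟨w.bypass_isPath, hcsup⟩
  have heq := hT.path_unique (⟨_, hP1⟩ : T.Path c z) ⟨_, hP2⟩
  have hsup := congrArg (fun p : T.Path c z => p.1.support) heq
  simp only at hsup
  have humem : u ∈ (Walk.cons hu w.bypass : T.Walk c z).support := by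
    simp [Walk.support_cons]
  rw [← hsup] at humem
  simp only [Walk.support_cons, Walk.support_nil, List.mem_cons, List.mem_singleton] at humem
  rcases humem with h | h | h
  · exact absurd h hu.ne'
  · exact h.symm
  · simp at h

/-- If from `z` in the branch `S'` of `c` (inside `S`) one can reach `c` avoiding
`Sᶜ ∪ {x}`, then one can reach `c'` avoiding `S'ᶜ ∪ {x}`. -/
lemma reach_root_gives_door (hT : T.IsAcyclic) {S : Set V} {c c' x : V}
    (hadj : T.Adj c c') :
    ∀ {z d : V} (w : T.Walk z d), d = c →
      z ∈ compSet T (Sᶜ ∪ {c}) c' → z ≠ x →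
      (∀ v ∈ w.support, v ∉ (Sᶜ ∪ {x} : Set V)) →
      c' ∈ compSet T ((compSet T (Sᶜ ∪ {c}) c')ᶜ ∪ {x}) z := by
  intro z d w
  induction w with
  | nil =>
    rintro rfl hz - -
    exact absurd (not_mem_del_of_mem_compSet hz) (by simp)
  | @cons a b d h p ih =>
    intro hd hz hzx hsup
    have hbS : b ∉ (Sᶜ : Set V) := fun hb => hsup b (by simp) (Or.inl hb)
    by_cases hbc : b = c
    · have hac' : a = c' :=
        unique_branch_neighbor hT hadj ((hbc ▸ h).symm) hz
    -- then a = c' which is in its own component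
      subst hac'
      refine mem_compSet_self ?_
      simp only [Set.mem_union, Set.mem_compl_iff, Set.mem_singleton_iff]
      push_neg
      exact ⟨hz, hzx⟩
    · have hbx : b ≠ x := fun hb => hsup b (by simp) (Or.inr (by simp [hb]))
      have hbS' : b ∈ compSet T (Sᶜ ∪ {c}) c' :=
        adj_mem_compSet hz h (by simp [hbS, hbc])
      have hres := ih hd hbS' hbx (fun v hv => hsup v (by simp [hv]))
      have haself : a ∈ compSet T ((compSet T (Sᶜ ∪ {c}) c')ᶜ ∪ {x}) a := by
        refine mem_compSet_self ?_
        simp only [Set.mem_union, Set.mem_compl_iff, Set.mem_singleton_iff]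
        push_neg
        exact ⟨hz, hzx⟩
      have hbmem : b ∈ compSet T ((compSet T (Sᶜ ∪ {c}) c')ᶜ ∪ {x}) a := by
        refine adj_mem_compSet haself h ?_
        simp only [Set.mem_union, Set.mem_compl_iff, Set.mem_singleton_iff]
        push_neg
        exact ⟨hbS', hbx⟩
      rw [compSet_eq_of_mem hbmem]
      exact hres

/-- The transfer lemma: a sub-branch inside the branch `S'` avoiding the door `c'`
agrees with the corresponding branch of `S`, and avoids `c`. -/
lemma branch_transfer (hT : T.IsAcyclic) {S : Set V} {c c' x z : V}
    (hadj : T.Adj c c')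
    (hz : z ∈ compSet T (Sᶜ ∪ {c}) c') (hzx : z ≠ x)
    (hdoor : c' ∉ compSet T ((compSet T (Sᶜ ∪ {c}) c')ᶜ ∪ {x}) z) :
    compSet T ((compSet T (Sᶜ ∪ {c}) c')ᶜ ∪ {x}) z = compSet T (Sᶜ ∪ {x}) z ∧
      c ∉ compSet T (Sᶜ ∪ {x}) z := by
  set S' := compSet T (Sᶜ ∪ {c}) c' with hS'
  have hS'sub : ∀ v, v ∈ S' → v ∉ (Sᶜ : Set V) ∧ v ≠ c := by
    intro v hv
    have := not_mem_del_of_mem_compSet hv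
    simp only [Set.mem_union, Set.mem_compl_iff, Set.mem_singleton_iff, not_or] at this
    exact ⟨this.1, this.2⟩
  have hcK : c ∉ compSet T (Sᶜ ∪ {x}) z := by
    rintro ⟨w, hw⟩
    exact hdoor (reach_root_gives_door hT hadj w rfl hz hzx hw)
  constructor
  · ext v
    constructor
    · rintro ⟨w, hw⟩
      refine ⟨w, fun a ha => ?_⟩
      have := hw a ha
      simp only [Set.mem_union, Set.mem_compl_iff, Set.mem_singleton_iff, not_or] at this ⊢
      exact ⟨(hS'sub a (not_not.1 this.1)).1, this.2⟩
    · rintro ⟨w, hw⟩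
      -- the walk avoids c (else c would be in the branch of z)
      have hcnot : c ∉ w.support := by
        intro hc
        exact hcK (mem_compSet_of_walk w hw hc)
      refine ⟨w, fun a ha => ?_⟩
      have h1 := hw a ha
      simp only [Set.mem_union, Set.mem_compl_iff, Set.mem_singleton_iff, not_or] at h1 ⊢
      constructor
      · -- a ∈ S'
        rw [not_not]
        have hamem : a ∈ compSet T (Sᶜ ∪ {c}) z := by
          refine mem_compSet_of_walk w ?_ ha
          intro b hb
          have h2 := hw b hb
          simp only [Set.mem_union, Set.mem_compl_iff, Set.mem_singleton_iff, not_or] at h2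
          simp only [Set.mem_union, Set.mem_compl_iff, Set.mem_singleton_iff, not_or]
          exact ⟨h2.1, fun hbc => hcnot (hbc ▸ hb)⟩
        have heqz : compSet T (Sᶜ ∪ {c}) c' = compSet T (Sᶜ ∪ {c}) z :=
          compSet_eq_of_mem hz
        show a ∈ compSet T (Sᶜ ∪ {c}) c'
        rw [heqz]
        exact hamem
      · exact h1.2
  · exact hcK

end TreeLemmas

section MainConstruction
variable {V : Type} [Fintype V] {T : SimpleGraph V}

lemma not_mem_del_union {S : Set V} {c u : V} (hu : u ∈ S) (huc : u ≠ c) :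
    u ∉ (Sᶜ ∪ {c} : Set V) := by
  simp only [Set.mem_union, Set.mem_compl_iff, Set.mem_singleton_iff, not_or]
  exact ⟨not_not_intro hu, huc⟩

lemma isPD_nil {w : ℕ} : IsPD T ∅ w ([] : List (Finset V)) := by
  refine ⟨by simp, by simp, ?_, ?_⟩
  · intro u v hu
    exact absurd hu (Set.notMem_empty u)
  · intro a i j k _ _ hai _
    simp at hai

lemma fold_branches {A : V → Set V} {w : ℕ} (F : Finset V)
    (hsep : ∀ u ∈ F, ∀ u' ∈ F, u ≠ u' → ∀ a b, a ∈ A u → b ∈ A u' →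
      a ≠ b ∧ ¬ T.Adj a b)
    (hPD : ∀ u ∈ F, PD T (A u) w) : PD T (⋃ u ∈ F, A u) w := by
  classical
  induction F using Finset.induction_on with
  | empty => exact ⟨[], by simpa using (isPD_nil (T := T) (w := w))⟩
  | @insert a F' ha ih =>
    obtain ⟨L2, hL2⟩ := ih
      (fun u hu u' hu' hne => hsep u (Finset.mem_insert_of_mem hu) u'
        (Finset.mem_insert_of_mem hu') hne)
      (fun u hu => hPD u (Finset.mem_insert_of_mem hu))
    obtain ⟨L1, hL1⟩ := hPD a (Finset.mem_insert_self a F')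
    refine ⟨L1 ++ L2, ?_⟩
    rw [Finset.set_biUnion_insert]
    refine hL1.disjUnion hL2 ?_ ?_
    · intro v hv hv'
      simp only [Set.mem_iUnion] at hv'
      obtain ⟨u', hu', hvu'⟩ := hv'
      exact (hsep a (Finset.mem_insert_self a F') u' (Finset.mem_insert_of_mem hu')
        (fun h => ha (h ▸ hu')) v v hv hvu').1 rfl
    · intro b b' hb hb'
      simp only [Set.mem_iUnion] at hb'
      obtain ⟨u', hu', hbu'⟩ := hb'
      exact (hsep a (Finset.mem_insert_self a F') u' (Finset.mem_insert_of_mem hu')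
        (fun h => ha (h ▸ hu')) b b' hb hbu').2

lemma cover_branch {S : Set V} {c y : V} (hcy : y ≠ c) (p : T.Walk c y) (hp : p.IsPath)
    (hsup : ∀ v ∈ p.support, v ∈ S) :
    ∃ u, T.Adj c u ∧ u ∈ S ∧ y ∈ compSet T (Sᶜ ∪ {c}) u := by
  cases p with
  | nil => exact absurd rfl hcy
  | @cons _ b _ h p' =>
    have hpath := (Walk.cons_isPath_iff _ _).1 hp
    refine ⟨b, h, hsup b (by simp), ⟨p', fun v hv => ?_⟩⟩
    simp only [Set.mem_union, Set.mem_compl_iff, Set.mem_singleton_iff, not_or]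
    exact ⟨fun hcon => hcon (hsup v (by simp [hv])), fun hvc => hpath.2 (hvc ▸ hv)⟩

/-- The main recursive construction: an anchored path decomposition of width `k`. -/
lemma lemmaM (hac : T.IsAcyclic) {k : ℕ} (hk : 1 ≤ k) :
    ∀ (n : ℕ) (S : Set V) (c : V), S.ncard ≤ n → c ∈ S →
    (∀ y ∈ S, ∃ w : T.Walk c y, ∀ v ∈ w.support, v ∈ S) →
    (∀ x ∈ S, ∀ y z : V, y ∈ S → z ∈ S → y ≠ x → z ≠ x →
       ¬ PD T (compSet T (Sᶜ ∪ {x}) y) (k-1) → ¬ PD T (compSet T (Sᶜ ∪ {x}) z) (k-1) →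
       c ∉ compSet T (Sᶜ ∪ {x}) y → c ∉ compSet T (Sᶜ ∪ {x}) z →
       compSet T (Sᶜ ∪ {x}) y = compSet T (Sᶜ ∪ {x}) z) →
    ∃ (B : Finset V) (L : List (Finset V)), IsPD T S k (B :: L) ∧ c ∈ B := by
  classical
  intro n
  induction n with
  | zero =>
    intro S c hcard hc _ _
    rw [Nat.le_zero, Set.ncard_eq_zero (Set.toFinite S)] at hcard
    exact absurd (hcard ▸ hc) (Set.notMem_empty c)
  | succ n ih =>
    intro S c hcard hc hconn hyp2
    set Br : V → Set V := fun u => compSet T (Sᶜ ∪ {c}) u with hBr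
    have hNmem : ∀ u, T.Adj c u → u ∈ S → u ∈ Br u := by
      intro u hadj hu
      exact mem_compSet_self (not_mem_del_union hu hadj.ne')
    have hBrS : ∀ u v, v ∈ Br u → v ∈ S ∧ v ≠ c := by
      intro u v hv
      have := not_mem_del_of_mem_compSet hv
      simp only [Set.mem_union, Set.mem_compl_iff, Set.mem_singleton_iff, not_or] at this
      exact ⟨not_not.1 this.1, this.2⟩
    have hcover : ∀ y ∈ S, y ≠ c → ∃ u, (T.Adj c u ∧ u ∈ S) ∧ y ∈ Br u := by
      intro y hy hyc
      obtain ⟨w0, hw0⟩ := hconn y hy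
      obtain ⟨p, hp, hpsup⟩ : ∃ p : T.Walk c y, p.IsPath ∧ ∀ v ∈ p.support, v ∈ S :=
        ⟨w0.bypass, w0.bypass_isPath, fun v hv => hw0 v (w0.support_bypass_subset hv)⟩
      obtain ⟨u, h1, h2, h3⟩ := cover_branch hyc p hp hpsup
      exact ⟨u, ⟨h1, h2⟩, h3⟩
    have hdisj : ∀ u u', T.Adj c u → T.Adj c u' → u' ∈ S → u ≠ u' →
        ∀ v, v ∈ Br u → v ∈ Br u' → False := by
      intro u u' hadju hadju' hu'S hne v hv hv'
      have h1 : Br u = compSet T (Sᶜ ∪ {c}) v := compSet_eq_of_mem hv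
      have h2 : Br u' = compSet T (Sᶜ ∪ {c}) v := compSet_eq_of_mem hv'
      have hself : u' ∈ Br u' := mem_compSet_self (not_mem_del_union hu'S hadju'.ne')
      have : u' ∈ Br u := by
        rw [hBr] at h1 h2 ⊢
        rw [h1, ← h2]
        exact mem_compSet_self (not_mem_del_union hu'S hadju'.ne')
      exact hne ((unique_branch_neighbor hac hadju hadju' this).symm)
    have hnocross : ∀ u u', T.Adj c u → T.Adj c u' → u' ∈ S → u ≠ u' →
        ∀ a b, a ∈ Br u → b ∈ Br u' → ¬ T.Adj a b := by
      intro u u' hu hu' hu'S hne a b ha hb hab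
      have hbBr : b ∈ Br u := adj_mem_compSet ha hab
        (not_mem_del_union (hBrS u' b hb).1 (hBrS u' b hb).2)
      exact hdisj u u' hu hu' hu'S hne b hbBr hb
    set N : Finset V := Finset.univ.filter (fun u => T.Adj c u ∧ u ∈ S) with hN
    have hNiff : ∀ u, u ∈ N ↔ (T.Adj c u ∧ u ∈ S) := by
      intro u
      simp [hN]
    have hkk : k - 1 + 1 = k := by omega
    by_cases hheavy : ∃ u ∈ N, ¬ PD T (Br u) (k-1)
    · -- CASE: there is a heavy branch at c, rooted at the neighbor cs
      obtain ⟨cs, hcsN, hcsheavy⟩ := hheavy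
      have hcsadj : T.Adj c cs := ((hNiff cs).1 hcsN).1
      have hcsS : cs ∈ S := ((hNiff cs).1 hcsN).2
      have hlight : ∀ u ∈ N, u ≠ cs → PD T (Br u) (k-1) := by
        intro u huN hune
        by_contra hueheavy
        have hadja := ((hNiff u).1 huN).1
        have huS := ((hNiff u).1 huN).2
        have heq := hyp2 c hc u cs huS hcsS hadja.ne' hcsadj.ne' hueheavy hcsheavy
          (fun hmem => (hBrS u c hmem).2 rfl) (fun hmem => (hBrS cs c hmem).2 rfl)
        have hucs : u ∈ compSet T (Sᶜ ∪ {c}) cs := by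
          rw [← heq]
          exact hNmem u hadja huS
        exact hune (unique_branch_neighbor hac hcsadj hadja hucs)
      set S' := Br cs with hS'def
      have hcnotS' : c ∉ S' := fun h => (hBrS cs c h).2 rfl
      have hS'subS : S' ⊆ S := fun v hv => (hBrS cs v hv).1
      have hcsS' : cs ∈ S' := hNmem cs hcsadj hcsS
      have hcard' : S'.ncard ≤ n := by
        have hss : S' ⊂ S := hS'subS.ssubset_of_ne (by
          intro h
          exact hcnotS' (h ▸ hc))
        have hlt : S'.ncard < S.ncard := Set.ncard_lt_ncard hss (Set.toFinite S)
        omega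
      have hconn' : ∀ y ∈ S', ∃ w : T.Walk cs y, ∀ v ∈ w.support, v ∈ S' := by
        intro y hy
        obtain ⟨w, hw⟩ := hy
        exact ⟨w, fun v hv => mem_compSet_of_walk w hw hv⟩
      have hyp2' : ∀ x ∈ S', ∀ y z : V, y ∈ S' → z ∈ S' → y ≠ x → z ≠ x →
          ¬ PD T (compSet T (S'ᶜ ∪ {x}) y) (k-1) → ¬ PD T (compSet T (S'ᶜ ∪ {x}) z) (k-1) →
          cs ∉ compSet T (S'ᶜ ∪ {x}) y → cs ∉ compSet T (S'ᶜ ∪ {x}) z →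
          compSet T (S'ᶜ ∪ {x}) y = compSet T (S'ᶜ ∪ {x}) z := by
        intro x hx y z hy hz hyx hzx hhy hhz hcy hcz
        obtain ⟨hey, hcKy⟩ := branch_transfer hac hcsadj hy hyx hcy
        obtain ⟨hez, hcKz⟩ := branch_transfer hac hcsadj hz hzx hcz
        rw [hey, hez]
        rw [hey] at hhy
        rw [hez] at hhz
        exact hyp2 x (hS'subS hx) y z (hS'subS hy) (hS'subS hz) hyx hzx hhy hhz hcKy hcKz
      obtain ⟨B', L', hPD', hc'B'⟩ := ih S' cs hcard' hcsS' hconn' hyp2'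
      set F := N.erase cs with hF
      have hmemF : ∀ u ∈ F, T.Adj c u ∧ u ∈ S ∧ u ≠ cs := by
        intro u hu
        have h1 := (hNiff u).1 (Finset.mem_of_mem_erase hu)
        exact ⟨h1.1, h1.2, Finset.ne_of_mem_erase hu⟩
      have hsepF : ∀ u ∈ F, ∀ u' ∈ F, u ≠ u' → ∀ a b, a ∈ Br u → b ∈ Br u' →
          a ≠ b ∧ ¬ T.Adj a b := by
        intro u hu u' hu' hne a b ha hb
        obtain ⟨ha1, ha2, -⟩ := hmemF u hu
        obtain ⟨hb1, hb2, -⟩ := hmemF u' hu'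
        constructor
        · intro h
          exact hdisj u u' ha1 hb1 hb2 hne b (h ▸ ha) hb
        · exact hnocross u u' ha1 hb1 hb2 hne a b ha hb
      obtain ⟨LF, hLF⟩ := fold_branches F hsepF
        (fun u hu => hlight u (Finset.mem_of_mem_erase hu) (Finset.ne_of_mem_erase hu))
      set U : Set V := ⋃ u ∈ F, Br u with hU
      have hcnotU : c ∉ U := by
        rw [hU]
        simp only [Set.mem_iUnion]
        rintro ⟨u, hu, hcu⟩
        exact (hBrS u c hcu).2 rfl
      have hL1 := hLF.consInsert hcnotU
      rw [hkk] at hL1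
      have hdisjUS' : ∀ v, v ∈ insert c U → v ∈ S' → False := by
        intro v hv hv'
        rcases Set.mem_insert_iff.1 hv with rfl | hv
        · exact hcnotS' hv'
        · rw [hU] at hv
          simp only [Set.mem_iUnion] at hv
          obtain ⟨u, hu, hvu⟩ := hv
          obtain ⟨h1, h2, h3⟩ := hmemF u hu
          exact hdisj u cs h1 hcsadj hcsS h3 v hvu hv'
      have hcross : ∀ a b, T.Adj a b → a ∈ insert c U → b ∈ S' → a = c ∧ b = cs := by
        intro a b hab ha hb
        rcases Set.mem_insert_iff.1 ha with rfl | ha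
        · exact ⟨rfl, unique_branch_neighbor hac hcsadj hab hb⟩
        · rw [hU] at ha
          simp only [Set.mem_iUnion] at ha
          obtain ⟨u, hu, hau⟩ := ha
          obtain ⟨h1, h2, h3⟩ := hmemF u hu
          exact absurd hab (hnocross u cs h1 hcsadj hcsS h3 a b hau hb)
      have hallc : ∀ B ∈ (({c} : Finset V) :: LF.map (insert c)), c ∈ B := by
        intro B hB
        rcases List.mem_cons.1 hB with rfl | hB
        · exact Finset.mem_singleton_self c
        · obtain ⟨B0, hB0, rfl⟩ := List.mem_map.1 hB
          exact Finset.mem_insert_self c B0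
      have hlink := hL1.link hPD' hallc (by simp) hc'B' hdisjUS'
        (Set.mem_insert c U) hcsS' hcross hk
      have hSeq : insert c U ∪ S' = S := by
        apply Set.eq_of_subset_of_subset
        · intro v hv
          rcases hv with hv | hv
          · rcases Set.mem_insert_iff.1 hv with rfl | hv
            · exact hc
            · rw [hU] at hv
              simp only [Set.mem_iUnion] at hv
              obtain ⟨u, hu, hvu⟩ := hv
              exact (hBrS u v hvu).1
          · exact hS'subS hv
        · intro v hv
          by_cases hvc : v = c
          · exact Or.inl (hvc ▸ Set.mem_insert c U)
          · obtain ⟨u, ⟨hu1, hu2⟩, hvu⟩ := hcover v hv hvc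
            by_cases hucs : u = cs
            · subst hucs
              exact Or.inr hvu
            · refine Or.inl (Set.mem_insert_of_mem c ?_)
              rw [hU]
              simp only [Set.mem_iUnion]
              exact ⟨u, Finset.mem_erase.2 ⟨hucs, (hNiff u).2 ⟨hu1, hu2⟩⟩, hvu⟩
      rw [hSeq] at hlink
      rw [List.cons_append] at hlink
      exact ⟨{c}, _, hlink, Finset.mem_singleton_self c⟩
    · -- CASE: all branches at c are light
      push_neg at hheavy
      have hsepN : ∀ u ∈ N, ∀ u' ∈ N, u ≠ u' → ∀ a b, a ∈ Br u → b ∈ Br u' →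
          a ≠ b ∧ ¬ T.Adj a b := by
        intro u hu u' hu' hne a b ha hb
        have h1 := (hNiff u).1 hu
        have h2 := (hNiff u').1 hu'
        constructor
        · intro h
          exact hdisj u u' h1.1 h2.1 h2.2 hne b (h ▸ ha) hb
        · exact hnocross u u' h1.1 h2.1 h2.2 hne a b ha hb
      obtain ⟨LF, hLF⟩ := fold_branches N hsepN (fun u hu => hheavy u hu)
      set U : Set V := ⋃ u ∈ N, Br u with hU
      have hcnotU : c ∉ U := by
        rw [hU]
        simp only [Set.mem_iUnion]
        rintro ⟨u, hu, hcu⟩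
        exact (hBrS u c hcu).2 rfl
      have hL1 := hLF.consInsert hcnotU
      rw [hkk] at hL1
      have hSeq : insert c U = S := by
        apply Set.eq_of_subset_of_subset
        · intro v hv
          rcases Set.mem_insert_iff.1 hv with rfl | hv
          · exact hc
          · rw [hU] at hv
            simp only [Set.mem_iUnion] at hv
            obtain ⟨u, hu, hvu⟩ := hv
            exact (hBrS u v hvu).1
        · intro v hv
          by_cases hvc : v = c
          · exact hvc ▸ Set.mem_insert c U
          · obtain ⟨u, ⟨hu1, hu2⟩, hvu⟩ := hcover v hv hvc
            refine Set.mem_insert_of_mem c ?_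
            rw [hU]
            simp only [Set.mem_iUnion]
            exact ⟨u, (hNiff u).2 ⟨hu1, hu2⟩, hvu⟩
      rw [hSeq] at hL1
      exact ⟨{c}, _, hL1, Finset.mem_singleton_self c⟩
end MainConstruction


section Final
variable {V : Type} [Fintype V] {T : SimpleGraph V}

lemma ncard_ge_three {α : Type} [Finite α] {s : Set α} {a b c : α}
    (ha : a ∈ s) (hb : b ∈ s) (hc : c ∈ s) (hab : a ≠ b) (hac : a ≠ c) (hbc : b ≠ c) :
    3 ≤ s.ncard := by
  have := (Set.two_lt_ncard (s := s) (Set.toFinite s)).2 ⟨a, ha, b, hb, c, hc, hab, hac, hbc⟩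
  omega

lemma part1_backward (hT : T.IsTree) {k : ℕ} (hk : 1 ≤ k)
    (h : ∀ x : V, {C : Set V | (∃ y, y ≠ x ∧ C = compSet T {x} y) ∧
        k ≤ pathwidth (SimpleGraph.induce C T)}.ncard ≤ 2) :
    pathwidth T ≤ k := by
  classical
  have hconn := hT.isConnected
  have : Nonempty V := hconn.nonempty
  -- no vertex has three distinct heavy components
  have H3 : ∀ x y1 y2 y3 : V, y1 ≠ x → y2 ≠ x → y3 ≠ x →
      ¬ PD T (compSet T {x} y1) (k-1) → ¬ PD T (compSet T {x} y2) (k-1) →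
      ¬ PD T (compSet T {x} y3) (k-1) →
      compSet T {x} y1 ≠ compSet T {x} y2 → compSet T {x} y1 ≠ compSet T {x} y3 →
      compSet T {x} y2 ≠ compSet T {x} y3 → False := by
    intro x y1 y2 y3 h1 h2 h3 hh1 hh2 hh3 h12 h13 h23
    have hmem : ∀ y : V, y ≠ x → ¬ PD T (compSet T {x} y) (k-1) →
        compSet T {x} y ∈ {C : Set V | (∃ y, y ≠ x ∧ C = compSet T {x} y) ∧
          k ≤ pathwidth (SimpleGraph.induce C T)} := by
      intro y hy hh
      exact ⟨⟨y, hy, rfl⟩, (le_pathwidth_induce_iff hk).2 hh⟩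
    have := ncard_ge_three (hmem y1 h1 hh1) (hmem y2 h2 hh2) (hmem y3 h3 hh3) h12 h13 h23
    have := h x
    omega
  have huniv : ∀ x : V, ((Set.univ : Set V)ᶜ ∪ {x} : Set V) = {x} := by
    intro x
    simp
  -- type-2 vertices
  set type2 : V → Prop := fun x => ∃ y1 y2 : V, y1 ≠ x ∧ y2 ≠ x ∧
      ¬ PD T (compSet T {x} y1) (k-1) ∧ ¬ PD T (compSet T {x} y2) (k-1) ∧
      compSet T {x} y1 ≠ compSet T {x} y2 with htype2
  -- we find an anchor c such that every vertex has at most one heavy branch avoiding c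
  have hanchor : ∃ c : V, ∀ x : V, ∀ y z : V, y ≠ x → z ≠ x →
      ¬ PD T (compSet T {x} y) (k-1) → ¬ PD T (compSet T {x} z) (k-1) →
      c ∉ compSet T {x} y → c ∉ compSet T {x} z →
      compSet T {x} y = compSet T {x} z := by
    by_cases hex : ∃ x, type2 x
    · -- take a minimal heavy branch over type-2 vertices
      set Nset : Set ℕ := {n | ∃ a y : V, type2 a ∧ y ≠ a ∧
          ¬ PD T (compSet T {a} y) (k-1) ∧ (compSet T {a} y).ncard = n} with hNset
      have hNne : Nset.Nonempty := by
        obtain ⟨a, y1, y2, hy1, hy2, hh1, hh2, hne⟩ := hex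
        exact ⟨_, a, y1, ⟨y1, y2, hy1, hy2, hh1, hh2, hne⟩, hy1, hh1, rfl⟩
      obtain ⟨a, y1, hatype2, hy1a, hBheavy, hBcard⟩ := Nat.sInf_mem hNne
      set B : Set V := compSet T {a} y1 with hB
      -- B contains no type-2 vertex
      have hBno2 : ∀ x, x ∈ B → ¬ type2 x := by
        intro x hxB ⟨z1, z2, hz1, hz2, hh1, hh2, hne⟩
        have hxa : x ≠ a := by
          intro hcon
          subst hcon
          exact (not_mem_del_of_mem_compSet hxB) rfl
        -- choose the one avoiding a
        have hpick : ∃ z : V, z ≠ x ∧ ¬ PD T (compSet T {x} z) (k-1) ∧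
            a ∉ compSet T {x} z := by
          by_cases haK : a ∈ compSet T {x} z1
          · refine ⟨z2, hz2, hh2, fun hmem => ?_⟩
            exact hne ((compSet_eq_of_mem haK).trans (compSet_eq_of_mem hmem).symm)
          · exact ⟨z1, hz1, hh1, haK⟩
        obtain ⟨z, hzx, hzheavy, haz⟩ := hpick
        -- the branch of z at x is strictly inside B
        have hsubB : compSet T {x} z ⊆ B := by
          intro v hv
          have hvx : v ≠ x := by
            intro hcon
            subst hcon
            exact (not_mem_del_of_mem_compSet hv) rfl
          obtain ⟨w0⟩ := hconn.preconnected v x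
          obtain ⟨w', hw'⟩ := exists_walk_from_root (D := ∅) hvx w0 (by simp)
          -- w' : walk from x to v staying in {x} ∪ compSet {x} v
          have hBv : compSet T ({x} : Set V) v = compSet T {x} z := by
            have : v ∈ compSet T ({x} : Set V) z := hv
            exact (compSet_eq_of_mem this).symm
          have hvB : v ∈ compSet T ({a} : Set V) x := by
            refine ⟨w', fun u hu => ?_⟩
            rcases hw' u hu with rfl | hmem
            · simp only [Set.mem_singleton_iff]
              exact fun hcon => hxa hcon
            · rw [Set.empty_union, hBv] at hmem
              simp only [Set.mem_singleton_iff]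
              intro hcon
              exact haz (hcon ▸ hmem)
          have hBx : B = compSet T ({a} : Set V) x := compSet_eq_of_mem hxB
          rw [hBx]
          exact hvB
        have hssub : compSet T {x} z ⊂ B := by
          refine hsubB.ssubset_of_ne ?_
          intro hcon
          rw [← hcon] at hxB
          exact (not_mem_del_of_mem_compSet hxB) rfl
        have hlt : (compSet T {x} z).ncard < B.ncard :=
          Set.ncard_lt_ncard hssub (Set.toFinite B)
        have hmemN : (compSet T {x} z).ncard ∈ Nset :=
          ⟨x, z, ⟨z1, z2, hz1, hz2, hh1, hh2, hne⟩, hzx, hzheavy, rfl⟩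
        have := Nat.sInf_le hmemN
        omega
      -- the door of B
      obtain ⟨w1⟩ := hconn.preconnected y1 a
      obtain ⟨c, hcadj, hcB⟩ := by
        have := exists_adj_mem_compSet (D := ∅) hy1a w1 (by simp)
        simpa [Set.empty_union] using this
      refine ⟨c, ?_⟩
      intro x y z hyx hzx hhy hhz hcy hcz
      by_contra hne
      have hxtype2 : type2 x := ⟨y, z, hyx, hzx, hhy, hhz, hne⟩
      have hxB : x ∉ B := fun hmem => hBno2 x hmem hxtype2
      by_cases hxa : x = a
      · subst hxa
        -- B, branch of y, branch of z are three distinct heavy branches at x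
        exact H3 x y1 y z hy1a hyx hzx hBheavy hhy hhz
          (fun hcon => hcy (hcon ▸ hcB)) (fun hcon => hcz (hcon ▸ hcB)) hne
      · -- the branch of a at x contains B, hence is heavy and contains c
        have hBsub : B ⊆ compSet T {x} a := by
          intro v hv
          have hBc : B = compSet T ({a} : Set V) c := compSet_eq_of_mem hcB
          have hvc : v ∈ compSet T ({a} : Set V) c := hBc ▸ hv
          obtain ⟨w, hw⟩ := hvc
          refine ⟨Walk.cons hcadj w, fun u hu => ?_⟩
          simp only [Walk.support_cons, List.mem_cons] at hu
          rcases hu with rfl | hu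
          · simp only [Set.mem_singleton_iff]
            exact fun hcon => hxa hcon.symm
          · have humem : u ∈ compSet T ({a} : Set V) c := mem_compSet_of_walk w hw hu
            have huB : u ∈ B := hBc ▸ humem
            simp only [Set.mem_singleton_iff]
            intro hcon
            exact hxB (hcon ▸ huB)
        have hKaheavy : ¬ PD T (compSet T {x} a) (k-1) := PD.anti_not hBheavy hBsub
        have hcKa : c ∈ compSet T {x} a := hBsub hcB
        exact H3 x a y z (fun hcon => hxa hcon.symm) hyx hzx hKaheavy hhy hhz
          (fun hcon => hcy (hcon ▸ hcKa)) (fun hcon => hcz (hcon ▸ hcKa)) hne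
    · -- no type-2 vertex at all: any anchor works
      push_neg at hex
      obtain ⟨c⟩ := ‹Nonempty V›
      refine ⟨c, ?_⟩
      intro x y z hyx hzx hhy hhz _ _
      by_contra hne
      exact hex x ⟨y, z, hyx, hzx, hhy, hhz, hne⟩
  obtain ⟨c, hc⟩ := hanchor
  have hyp2 : ∀ x ∈ (Set.univ : Set V), ∀ y z : V, y ∈ (Set.univ : Set V) →
      z ∈ (Set.univ : Set V) → y ≠ x → z ≠ x →
      ¬ PD T (compSet T ((Set.univ : Set V)ᶜ ∪ {x}) y) (k-1) →
      ¬ PD T (compSet T ((Set.univ : Set V)ᶜ ∪ {x}) z) (k-1) →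
      c ∉ compSet T ((Set.univ : Set V)ᶜ ∪ {x}) y →
      c ∉ compSet T ((Set.univ : Set V)ᶜ ∪ {x}) z →
      compSet T ((Set.univ : Set V)ᶜ ∪ {x}) y = compSet T ((Set.univ : Set V)ᶜ ∪ {x}) z := by
    intro x _ y z _ _ hyx hzx hhy hhz hcy hcz
    rw [huniv x] at hhy hhz hcy hcz ⊢
    exact hc x y z hyx hzx hhy hhz hcy hcz
  have hconn' : ∀ y ∈ (Set.univ : Set V), ∃ w : T.Walk c y, ∀ v ∈ w.support,
      v ∈ (Set.univ : Set V) := by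
    intro y _
    obtain ⟨w⟩ := hconn.preconnected c y
    exact ⟨w, fun v _ => Set.mem_univ v⟩
  obtain ⟨B0, L0, hPD0, -⟩ := lemmaM hT.IsAcyclic hk (Set.univ : Set V).ncard
    (Set.univ : Set V) c le_rfl (Set.mem_univ c) hconn' hyp2
  exact pathwidth_le_iff_PD.2 ⟨_, hPD0⟩

end Final


/-- For every finite tree `T` and integer `k ≥ 1`: `pw(T) ≤ k` iff for
every vertex `x`, at most two connected components of `T − x` have pathwidth at least `k`.
Moreover `pw(T) = 0` iff `T` is a single vertex.  In particular, if some vertex `x` has at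
least three components of `T − x` of pathwidth at least `r`, then `pw(T) ≥ r + 1`. -/
theorem pathwidth_recursive_characterization :
    ∀ (V : Type) [Fintype V] (T : SimpleGraph V), T.IsTree →
      (∀ k : ℕ, 1 ≤ k →
        (pathwidth T ≤ k ↔
          ∀ x : V,
            {C : Set V | (∃ y, y ≠ x ∧ C = compSet T {x} y) ∧
              k ≤ pathwidth (SimpleGraph.induce C T)}.ncard ≤ 2)) ∧
      (pathwidth T = 0 ↔ Fintype.card V = 1) ∧
      (∀ r : ℕ, ∀ x : V,
        3 ≤ {C : Set V | (∃ y, y ≠ x ∧ C = compSet T {x} y) ∧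
              r ≤ pathwidth (SimpleGraph.induce C T)}.ncard →
        r + 1 ≤ pathwidth T) := by
  intro V _ T hT
  refine ⟨?_, pathwidth_eq_zero_iff hT, fun r x h => part3_lemma hT r x h⟩
  intro k hk
  exact ⟨fun hpw x => part1_forward hT hk hpw x, fun h => part1_backward hT hk h⟩
end

section
/- There is a universal constant C such that for every caterpillar tree T — a finite tree containing a path P (the spine) such that every vertex of T not on P is adjacent to a vertex of P — and every prediction vertex s ∈ V(T), there exists a deterministic search strategy, correct on all of V(T), whose query cost on every target t ∈ V(T) is at most C · log₂(dist_T(s,t) + 2). -/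
open SimpleGraph

namespace Cater

open Finset

def gQ (k : ℕ) : ℚ := 1 / ((k+1)*(k+2))

lemma gQ_pos (k : ℕ) : 0 < gQ k := by
  unfold gQ; positivity

lemma gQ_nonneg (k : ℕ) : 0 ≤ gQ k := (gQ_pos k).le

lemma sum_gQ (K : ℕ) : ∑ k ∈ Finset.range K, gQ k = 1 - 1/(K+1) := by
  induction K with
  | zero => simp
  | succ K ih =>
      rw [Finset.sum_range_succ, ih]
      unfold gQ
      have h1 : (K:ℚ)+1 ≠ 0 := by positivity
      have h2 : (K:ℚ)+2 ≠ 0 := by positivity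
      push_cast
      field_simp
      ring

lemma sum_gQ_le_one (K : ℕ) : ∑ k ∈ Finset.range K, gQ k ≤ 1 := by
  rw [sum_gQ]
  have : (0:ℚ) < 1/(K+1) := by positivity
  linarith

lemma sum_gQ_succ_le_one (K : ℕ) : ∑ k ∈ Finset.range K, gQ (k+1) ≤ 1 := by
  have h := sum_gQ_le_one (K+1)
  rw [Finset.sum_range_succ'] at h
  have := gQ_nonneg 0
  linarith

def ndist (i j : ℕ) : ℕ := (i - j) + (j - i)

noncomputable def phi (c lo hi : ℕ) : ℚ := ∑ i ∈ Finset.Icc lo hi, gQ (ndist c i)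

lemma phi_nonneg (c lo hi : ℕ) : 0 ≤ phi c lo hi :=
  Finset.sum_nonneg fun i _ => gQ_nonneg _

lemma gQ_le_phi {c lo hi j : ℕ} (h1 : lo ≤ j) (h2 : j ≤ hi) :
    gQ (ndist c j) ≤ phi c lo hi :=
  Finset.single_le_sum (fun i _ => gQ_nonneg _) (Finset.mem_Icc.2 ⟨h1, h2⟩)

lemma phi_split (c : ℕ) {lo m hi : ℕ} (h1 : lo ≤ m) (h2 : m ≤ hi) :
    phi c lo hi = phi c lo m + phi c (m+1) hi := by
  unfold phi
  rw [← Finset.Ico_add_one_right_eq_Icc, ← Finset.Ico_add_one_right_eq_Icc, ← Finset.Ico_add_one_right_eq_Icc]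
  exact (Finset.sum_Ico_consecutive _ (by omega) (by omega)).symm

lemma phi_le_two (c lo hi : ℕ) : phi c lo hi ≤ 2 := by
  classical
  unfold phi
  rw [← Finset.sum_filter_add_sum_filter_not (Finset.Icc lo hi) (fun i => i ≤ c)]
  have hA : ∑ i ∈ (Finset.Icc lo hi).filter (fun i => i ≤ c), gQ (ndist c i) ≤ 1 := by
    have himg : ∑ i ∈ (Finset.Icc lo hi).filter (fun i => i ≤ c), gQ (ndist c i)
        = ∑ k ∈ ((Finset.Icc lo hi).filter (fun i => i ≤ c)).image (fun i => c - i), gQ k := by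
      rw [Finset.sum_image]
      · apply Finset.sum_congr rfl
        intro i hi
        have : i ≤ c := (Finset.mem_filter.1 hi).2
        congr 1
        unfold ndist; omega
      · intro x hx y hy hxy
        have hx' : x ≤ c := (Finset.mem_filter.1 hx).2
        have hy' : y ≤ c := (Finset.mem_filter.1 hy).2
        simp only at hxy
        omega
    rw [himg]
    calc ∑ k ∈ ((Finset.Icc lo hi).filter (fun i => i ≤ c)).image (fun i => c - i), gQ k
        ≤ ∑ k ∈ Finset.range (c+1), gQ k := by
          apply Finset.sum_le_sum_of_subset_of_nonneg
          · intro k hk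
            obtain ⟨i, _, rfl⟩ := Finset.mem_image.1 hk
            exact Finset.mem_range.2 (by omega)
          · intro k _ _; exact gQ_nonneg k
      _ ≤ 1 := sum_gQ_le_one _
  have hB : ∑ i ∈ (Finset.Icc lo hi).filter (fun i => ¬ i ≤ c), gQ (ndist c i) ≤ 1 := by
    have himg : ∑ i ∈ (Finset.Icc lo hi).filter (fun i => ¬ i ≤ c), gQ (ndist c i)
        = ∑ k ∈ ((Finset.Icc lo hi).filter (fun i => ¬ i ≤ c)).image (fun i => i - c - 1),
            gQ (k+1) := by
      rw [Finset.sum_image]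
      · apply Finset.sum_congr rfl
        intro i hi
        have : ¬ i ≤ c := (Finset.mem_filter.1 hi).2
        congr 1
        unfold ndist; omega
      · intro x hx y hy hxy
        have hx' : ¬ x ≤ c := (Finset.mem_filter.1 hx).2
        have hy' : ¬ y ≤ c := (Finset.mem_filter.1 hy).2
        simp only at hxy
        omega
    rw [himg]
    calc ∑ k ∈ ((Finset.Icc lo hi).filter (fun i => ¬ i ≤ c)).image (fun i => i - c - 1), gQ (k+1)
        ≤ ∑ k ∈ Finset.range (hi+1), gQ (k+1) := by
          apply Finset.sum_le_sum_of_subset_of_nonneg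
          · intro k hk
            obtain ⟨i, hiF, rfl⟩ := Finset.mem_image.1 hk
            have := (Finset.mem_Icc.1 (Finset.mem_filter.1 hiF).1).2
            exact Finset.mem_range.2 (by omega)
          · intro k _ _; exact gQ_nonneg _
      _ ≤ 1 := sum_gQ_succ_le_one _
  linarith

noncomputable def med (c lo hi : ℕ) : ℕ :=
  sInf {m | lo ≤ m ∧ phi c lo hi ≤ 2 * phi c lo m}

lemma med_mem_aux {c lo hi : ℕ} (h : lo ≤ hi) :
    hi ∈ {m | lo ≤ m ∧ phi c lo hi ≤ 2 * phi c lo m} :=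
  ⟨h, by have := phi_nonneg c lo hi; linarith⟩

lemma med_le {c lo hi : ℕ} (h : lo ≤ hi) : med c lo hi ≤ hi :=
  Nat.sInf_le (med_mem_aux h)

lemma le_med {c lo hi : ℕ} (h : lo ≤ hi) : lo ≤ med c lo hi :=
  (Nat.sInf_mem (Set.nonempty_of_mem (med_mem_aux h))).1

lemma med_spec {c lo hi : ℕ} (h : lo ≤ hi) :
    phi c lo hi ≤ 2 * phi c lo (med c lo hi) :=
  (Nat.sInf_mem (Set.nonempty_of_mem (med_mem_aux h))).2

lemma med_left {c lo hi : ℕ} (hlo : lo ≤ med c lo hi - 1) (hm : 0 < med c lo hi) :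
    2 * phi c lo (med c lo hi - 1) < phi c lo hi := by
  have hlt : med c lo hi - 1 < med c lo hi := by omega
  have := Nat.notMem_of_lt_sInf (s := {m | lo ≤ m ∧ phi c lo hi ≤ 2 * phi c lo m}) hlt
  simp only [Set.mem_setOf_eq, not_and, not_le] at this
  exact this hlo



inductive MSt (V : Type) where
  | run (lo hi : ℕ)
  | ask (a : V)
  | fin

variable {V : Type} [DecidableEq V]

noncomputable def mq (L : List V) (d : V) (c : ℕ) : MSt V → V
  | .run lo hi => L.getD (med c lo hi) d
  | .ask a => a
  | .fin => d

noncomputable def mtr (L : List V) (c : ℕ) : MSt V → Option V → MSt V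
  | .run lo hi, some a =>
      if a ∈ L then
        (if L.idxOf a < med c lo hi then .run lo (med c lo hi - 1)
         else .run (med c lo hi + 1) hi)
      else .ask a
  | _, _ => .fin

noncomputable def mrun (T : SimpleGraph V) (L : List V) (d : V) (c : ℕ) (t : V) : ℕ → MSt V
  | 0 => .run 0 (L.length - 1)
  | n+1 => mtr L c (mrun T L d c t n) (dirO T t (mq L d c (mrun T L d c t n)))

noncomputable def mσ (L : List V) (d : V) (c : ℕ) : Strategy V :=
  fun h => mq L d c (h.foldl (fun st pr => mtr L c st pr.2) (.run 0 (L.length - 1)))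

lemma foldl_hist (T : SimpleGraph V) (L : List V) (d : V) (c : ℕ) (t : V) (n : ℕ) :
    (histRun T (mσ L d c) t n).foldl (fun st pr => mtr L c st pr.2) (.run 0 (L.length - 1))
      = mrun T L d c t n := by
  induction n with
  | zero => rfl
  | succ n ih =>
      rw [histRun, List.foldl_append, ih]
      simp only [List.foldl_cons, List.foldl_nil, mrun]
      congr 1
      show dirO T t (mσ L d c (histRun T (mσ L d c) t n)) = _
      rw [mσ, ih]

lemma queryAt_eq (T : SimpleGraph V) (L : List V) (d : V) (c : ℕ) (t : V) (n : ℕ) :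
    queryAt T (mσ L d c) t n = mq L d c (mrun T L d c t n) := by
  rw [queryAt]
  show mq L d c _ = _
  rw [foldl_hist]

/-- The bundle of facts about the tree and its spine that the search analysis uses. -/
structure Setup (T : SimpleGraph V) (L : List V) (pi : V → V) (d : V) : Prop where
  nodup : L.Nodup
  nonnil : L ≠ []
  piL : ∀ v, pi v ∈ L
  pi_mem : ∀ v ∈ L, pi v = v
  dz : ∀ a b : V, T.dist a b = 0 → a = b
  tri : ∀ a b c : V, T.dist a c ≤ T.dist a b + T.dist b c
  adjd : ∀ a b : V, T.Adj a b → T.dist a b = 1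
  exi : ∀ v t : V, v ≠ t → ∃ x, T.Adj v x ∧ T.dist x t + 1 = T.dist v t
  uniq : ∀ y, y ∉ L → ∀ x, T.Adj y x → x = pi y
  leaf : ∀ a, a ∉ L → ∀ b, b ≠ a → T.dist b a = T.dist b (pi a) + 1
  df : ∀ t : V, ∀ i, i < L.length →
        T.dist (L.getD i d) t = ndist i (L.idxOf (pi t)) + (if t ∈ L then 0 else 1)

variable {T : SimpleGraph V} {L : List V} {pi : V → V} {d : V}

lemma getD_mem {i : ℕ} (h : i < L.length) : L.getD i d ∈ L := by
  rw [List.getD_eq_getElem L d h]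
  exact List.getElem_mem h

lemma indexOf_getD (hnd : L.Nodup) {i : ℕ} (h : i < L.length) :
    L.idxOf (L.getD i d) = i := by
  rw [List.getD_eq_getElem L d h]
  exact hnd.idxOf_getElem i h

lemma getD_indexOf {a : V} (h : a ∈ L) : L.getD (L.idxOf a) d = a := by
  rw [List.getD_eq_getElem L d (List.idxOf_lt_length_iff.2 h)]
  exact List.getElem_idxOf _

lemma core (S : Setup T L pi d) {t : V} {i : ℕ} (hiN : i < L.length)
    (hne : L.getD i d ≠ t) {a : V} (ha : T.Adj (L.getD i d) a)
    (hda : T.dist a t + 1 = T.dist (L.getD i d) t) :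
    (L.idxOf (pi t) < i ∧ a = L.getD (i-1) d)
    ∨ (i < L.idxOf (pi t) ∧ a = L.getD (i+1) d)
    ∨ (L.idxOf (pi t) = i ∧ a = t ∧ t ∉ L) := by
  set j := L.idxOf (pi t) with hj
  have hvt := S.df t i hiN
  by_cases haL : a ∈ L
  · -- a on the spine
    have hjaN : L.idxOf a < L.length := List.idxOf_lt_length_iff.2 haL
    have hgva : L.getD (L.idxOf a) d = a := getD_indexOf haL
    have h1 : T.dist (L.getD i d) a = ndist i (L.idxOf a) := by
      have := S.df a i hiN
      rw [S.pi_mem a haL, if_pos haL] at this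
      omega
    have h2 : T.dist (L.getD i d) a = 1 := S.adjd _ _ ha
    have h3 : T.dist a t = ndist (L.idxOf a) j + (if t ∈ L then 0 else 1) := by
      have := S.df t (L.idxOf a) hjaN
      rwa [hgva] at this
    have hcase : (L.idxOf a = i+1 ∧ i < j) ∨ (L.idxOf a = i - 1 ∧ j < i ∧ 1 ≤ i) := by
      simp only [ndist] at h1 h3 hvt
      omega
    rcases hcase with ⟨he, hlt⟩ | ⟨he, hlt, hi1⟩
    · exact Or.inr (Or.inl ⟨hlt, by rw [← hgva, he]⟩)
    · exact Or.inl ⟨hlt, by rw [← hgva, he]⟩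
  · -- a is a leaf hanging off the queried vertex
    have hpa : pi a = L.getD i d := (S.uniq a haL _ ha.symm).symm
    by_cases hat : a = t
    · subst hat
      refine Or.inr (Or.inr ⟨?_, rfl, haL⟩)
      rw [hj, hpa]
      exact indexOf_getD S.nodup hiN
    · exfalso
      have hta : T.dist t a = T.dist t (pi a) + 1 := S.leaf a haL t (Ne.symm hat)
      rw [hpa] at hta
      have hc1 : T.dist a t = T.dist t a := SimpleGraph.dist_comm
      have hc2 : T.dist t (L.getD i d) = T.dist (L.getD i d) t := SimpleGraph.dist_comm
      omega

lemma main_ind (S : Setup T L pi d) (c : ℕ) (t : V) :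
    ∀ r n lo hi, mrun T L d c t n = .run lo hi →
      lo ≤ L.idxOf (pi t) → L.idxOf (pi t) ≤ hi → hi < L.length →
      phi c lo hi < gQ (ndist c (L.idxOf (pi t))) * 2 ^ r →
      ∃ k, k ≤ n + r + 1 ∧ mq L d c (mrun T L d c t k) = t := by
  intro r
  induction r with
  | zero =>
      intro n lo hi hrun hlo hhi hhiN hphi
      exfalso
      have h1 := gQ_le_phi (c := c) hlo hhi
      rw [pow_zero, mul_one] at hphi
      linarith
  | succ r ih =>
      intro n lo hi hrun hlo hhi hhiN hphi
      have hlohi : lo ≤ hi := le_trans hlo hhi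
      have hmlo : lo ≤ med c lo hi := le_med hlohi
      have hmhi : med c lo hi ≤ hi := med_le hlohi
      have hmN : med c lo hi < L.length := lt_of_le_of_lt hmhi hhiN
      have hqn : mq L d c (mrun T L d c t n) = L.getD (med c lo hi) d := by
        rw [hrun]; rfl
      have hpow : (2:ℚ) ^ (r+1) = 2 ^ r * 2 := pow_succ 2 r
      by_cases hvt : L.getD (med c lo hi) d = t
      · exact ⟨n, by omega, by rw [hqn, hvt]⟩
      · have hexists : ∃ x, T.Adj (L.getD (med c lo hi) d) x ∧
            T.dist x t + 1 = T.dist (L.getD (med c lo hi) d) t := S.exi _ t hvt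
        have hdir : dirO T t (L.getD (med c lo hi) d) = some hexists.choose := by
          rw [dirO, dif_pos hexists]
        obtain ⟨ha1, ha2⟩ := hexists.choose_spec
        have hrun1 : mrun T L d c t (n+1) = mtr L c (.run lo hi) (some hexists.choose) := by
          rw [mrun, hqn, hdir, hrun]
        rcases core S hmN hvt ha1 ha2 with ⟨hjlt, haeq⟩ | ⟨hjlt, haeq⟩ | ⟨hjeq, haeq, htL⟩
        · -- answer points left
          have hm1 : 0 < med c lo hi := by omega
          have haL : hexists.choose ∈ L := by
            rw [haeq]; exact getD_mem (by omega)
          have hidx : L.idxOf hexists.choose = med c lo hi - 1 := by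
            rw [haeq]; exact indexOf_getD S.nodup (by omega)
          have hnext : mrun T L d c t (n+1) = .run lo (med c lo hi - 1) := by
            rw [hrun1]
            simp only [mtr, if_pos haL, hidx]
            rw [if_pos (by omega)]
          have hml := med_left (c := c) (lo := lo) (hi := hi) (by omega) hm1
          have hphi' : phi c lo (med c lo hi - 1)
              < gQ (ndist c (L.idxOf (pi t))) * 2 ^ r := by
            rw [hpow] at hphi; linarith
          obtain ⟨k, hk1, hk2⟩ := ih (n+1) lo (med c lo hi - 1) hnext hlo (by omega)
            (by omega) hphi'
          exact ⟨k, by omega, hk2⟩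
        · -- answer points right
          have haL : hexists.choose ∈ L := by
            rw [haeq]; exact getD_mem (by omega)
          have hidx : L.idxOf hexists.choose = med c lo hi + 1 := by
            rw [haeq]; exact indexOf_getD S.nodup (by omega)
          have hnext : mrun T L d c t (n+1) = .run (med c lo hi + 1) hi := by
            rw [hrun1]
            simp only [mtr, if_pos haL, hidx]
            rw [if_neg (by omega)]
          have hms := med_spec (c := c) hlohi
          have hsp := phi_split c (lo := lo) (m := med c lo hi) (hi := hi) hmlo hmhi
          have hphi' : phi c (med c lo hi + 1) hi
              < gQ (ndist c (L.idxOf (pi t))) * 2 ^ r := by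
            rw [hpow] at hphi; linarith
          obtain ⟨k, hk1, hk2⟩ := ih (n+1) (med c lo hi + 1) hi hnext (by omega) (by omega)
            hhiN hphi'
          exact ⟨k, by omega, hk2⟩
        · -- the target is a leaf hanging at the queried vertex
          have hnext : mrun T L d c t (n+1) = .ask t := by
            rw [hrun1, haeq]
            simp only [mtr]
            rw [if_neg htL]
          exact ⟨n+1, by omega, by rw [hnext]; rfl⟩

lemma master (S : Setup T L pi d) (s : V) :
    ∃ σ : Strategy V, CorrectOn T σ Set.univ ∧
      ∀ t, costOf T σ t ≤ 11 * Nat.log 2 (T.dist s t + 2) := by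
  set c := L.idxOf (pi s) with hc
  have hNpos : 0 < L.length := List.length_pos_iff.2 S.nonnil
  have key : ∀ t : V, ∃ k, k ≤ 2 * Nat.log 2 (ndist c (L.idxOf (pi t)) + 2) + 4 ∧
      queryAt T (mσ L d c) t k = t := by
    intro t
    set j := L.idxOf (pi t) with hj
    set D := ndist c j with hD
    set r := 2 * Nat.log 2 (D + 2) + 3 with hr
    have hjN : j < L.length := List.idxOf_lt_length_iff.2 (S.piL t)
    have hnat : 2 * ((D + 1) * (D + 2)) < 2 ^ r := by
      have h1 : D + 2 < 2 ^ (Nat.log 2 (D + 2) + 1) :=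
        Nat.lt_pow_succ_log_self (by norm_num) _
      have h2 : (D + 2) * (D + 2) < 2 ^ (Nat.log 2 (D + 2) + 1) * 2 ^ (Nat.log 2 (D + 2) + 1) :=
        Nat.mul_lt_mul'' h1 h1
      have h3 : 2 ^ (Nat.log 2 (D + 2) + 1) * 2 ^ (Nat.log 2 (D + 2) + 1)
          = 2 ^ (2 * Nat.log 2 (D + 2) + 2) := by
        rw [← pow_add]; ring_nf
      calc 2 * ((D + 1) * (D + 2)) ≤ 2 * ((D + 2) * (D + 2)) := by nlinarith
        _ < 2 * 2 ^ (2 * Nat.log 2 (D + 2) + 2) := by omega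
        _ = 2 ^ r := by rw [hr, pow_succ]; ring
    have hq : phi c 0 (L.length - 1) < gQ D * 2 ^ r := by
      have h2 : phi c 0 (L.length - 1) ≤ 2 := phi_le_two _ _ _
      have hcast : (2:ℚ) * ((D + 1) * (D + 2)) < 2 ^ r := by
        have := (Nat.cast_lt (α := ℚ)).2 hnat
        push_cast at this
        convert this using 2 <;> push_cast <;> ring
      have hpos : (0:ℚ) < (D + 1) * (D + 2) := by positivity
      have : (2:ℚ) < gQ D * 2 ^ r := by
        rw [gQ, div_mul_eq_mul_div, one_mul, lt_div_iff₀ hpos]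
        push_cast
        push_cast at hcast
        linarith
      linarith
    obtain ⟨k, hk1, hk2⟩ := main_ind S c t r 0 0 (L.length - 1) rfl (Nat.zero_le _)
      (by omega) (by omega) hq
    refine ⟨k, by omega, ?_⟩
    rw [queryAt_eq]; exact hk2
  refine ⟨mσ L d c, ?_, ?_⟩
  · intro t _
    obtain ⟨k, _, hk⟩ := key t
    exact ⟨k, hk⟩
  · intro t
    obtain ⟨k, hk1, hk2⟩ := key t
    have hcost : costOf T (mσ L d c) t ≤ k + 1 := by
      rw [costOf]
      have := Nat.sInf_le (show k ∈ {n | queryAt T (mσ L d c) t n = t} from hk2)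
      omega
    have hcN : c < L.length := List.idxOf_lt_length_iff.2 (S.piL s)
    have hdj : ndist c (L.idxOf (pi t)) ≤ T.dist s t + 2 := by
      have h1 : T.dist (L.getD c d) (pi t) = ndist c (L.idxOf (pi t)) := by
        have := S.df (pi t) c hcN
        rw [S.pi_mem (pi t) (S.piL t), if_pos (S.piL t)] at this
        omega
      have h2 : L.getD c d = pi s := getD_indexOf (S.piL s)
      have h3 : T.dist (pi s) (pi t) ≤ T.dist (pi s) s + (T.dist s t + T.dist t (pi t)) := by
        have ha := S.tri (pi s) s (pi t)
        have hb := S.tri s t (pi t)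
        omega
      have h4 : T.dist (pi s) s ≤ 1 := by
        by_cases hs : s ∈ L
        · rw [S.pi_mem s hs, SimpleGraph.dist_self]; omega
        · have hne : pi s ≠ s := fun he => hs (he ▸ S.piL s)
          rw [S.leaf s hs (pi s) hne, SimpleGraph.dist_self]
      have h5 : T.dist t (pi t) ≤ 1 := by
        by_cases ht : t ∈ L
        · rw [S.pi_mem t ht, SimpleGraph.dist_self]; omega
        · have hne : pi t ≠ t := fun he => ht (he ▸ S.piL t)
          have := S.leaf t ht (pi t) hne
          have hcm : T.dist t (pi t) = T.dist (pi t) t := SimpleGraph.dist_comm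
          rw [SimpleGraph.dist_self] at this
          omega
      rw [h2] at h1
      omega
    have hlog : Nat.log 2 (ndist c (L.idxOf (pi t)) + 2) ≤ Nat.log 2 (T.dist s t + 2) + 2 := by
      have h6 : ndist c (L.idxOf (pi t)) + 2 ≤ (T.dist s t + 2) * 2 * 2 := by omega
      calc Nat.log 2 (ndist c (L.idxOf (pi t)) + 2)
          ≤ Nat.log 2 ((T.dist s t + 2) * 2 * 2) := Nat.log_mono_right h6
        _ = Nat.log 2 ((T.dist s t + 2) * 2) + 1 := Nat.log_mul_base (by norm_num) (by omega)
        _ = Nat.log 2 (T.dist s t + 2) + 2 := by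
            rw [Nat.log_mul_base (by norm_num) (by omega)]
    have hlog1 : 1 ≤ Nat.log 2 (T.dist s t + 2) :=
      (Nat.le_log_iff_pow_le (by norm_num) (by omega)).2 (by omega)
    omega



variable {V : Type} [DecidableEq V] {T : SimpleGraph V}

lemma tree_path_length (hT : T.IsTree) {a b : V} (q : T.Walk a b) (hq : q.IsPath) :
    q.length = T.dist a b := by
  refine le_antisymm ?_ (SimpleGraph.dist_le q)
  obtain ⟨w, hw⟩ := hT.isConnected.exists_walk_length_eq_dist a b
  have hbp : w.bypass.IsPath := w.bypass_isPath
  have heq : (⟨q, hq⟩ : T.Path a b) = ⟨w.bypass, hbp⟩ :=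
    isAcyclic_iff_path_unique.mp hT.IsAcyclic _ _
  have hq' : q = w.bypass := congrArg Subtype.val heq
  rw [hq']
  calc w.bypass.length ≤ w.length := w.length_bypass_le
    _ = T.dist a b := hw

lemma exists_closer (hT : T.IsTree) (v t : V) (h : v ≠ t) :
    ∃ x, T.Adj v x ∧ T.dist x t + 1 = T.dist v t := by
  have hpos : 0 < T.dist v t := hT.isConnected.pos_dist_of_ne h
  obtain ⟨w, hw⟩ := hT.isConnected.exists_walk_length_eq_dist v t
  cases w with
  | nil => rw [SimpleGraph.Walk.length_nil] at hw; omega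
  | @cons _ x _ h' q =>
      refine ⟨x, h', ?_⟩
      have h1 : T.dist x t ≤ q.length := SimpleGraph.dist_le q
      have h2 : T.dist v t ≤ T.dist v x + T.dist x t := hT.isConnected.dist_triangle
      have h3 : T.dist v x = 1 := SimpleGraph.dist_eq_one_iff_adj.2 h'
      rw [SimpleGraph.Walk.length_cons] at hw
      omega

lemma exists_path_support_subset {u w : V} {p : T.Walk u w} (hp : p.IsPath) {a b : V}
    (ha : a ∈ p.support) (hb : b ∈ p.support) :
    ∃ q : T.Walk a b, q.IsPath ∧ ∀ x ∈ q.support, x ∈ p.support := by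
  have hspec := p.take_spec ha
  have hb' : b ∈ (p.takeUntil a ha).support ∨ b ∈ (p.dropUntil a ha).support := by
    rw [← hspec, SimpleGraph.Walk.mem_support_append_iff] at hb
    exact hb
  rcases hb' with hb' | hb'
  · refine ⟨((p.takeUntil a ha).dropUntil b hb').reverse,
      ((hp.takeUntil ha).dropUntil hb').reverse, ?_⟩
    intro x hx
    rw [SimpleGraph.Walk.support_reverse] at hx
    have := SimpleGraph.Walk.support_dropUntil_subset _ hb' (List.mem_reverse.1 hx)
    exact SimpleGraph.Walk.support_takeUntil_subset _ ha this
  · refine ⟨(p.dropUntil a ha).takeUntil b hb', (hp.dropUntil ha).takeUntil hb', ?_⟩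
    intro x hx
    have := SimpleGraph.Walk.support_takeUntil_subset _ hb' hx
    exact SimpleGraph.Walk.support_dropUntil_subset _ ha this

lemma uniq_neighbor (hT : T.IsTree) {u w : V} {p : T.Walk u w} (hp : p.IsPath)
    (hcov : ∀ v, v ∉ p.support → ∃ z ∈ p.support, T.Adj v z)
    {y : V} (hy : y ∉ p.support) {z : V} (hz : z ∈ p.support) (hyz : T.Adj y z)
    {x : V} (hx : T.Adj y x) : x = z := by
  by_contra hne
  have hP1 : (SimpleGraph.Walk.cons hx.symm (SimpleGraph.Walk.cons hyz SimpleGraph.Walk.nil)).IsPath := by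
    simp only [SimpleGraph.Walk.cons_isPath_iff, SimpleGraph.Walk.support_cons,
      SimpleGraph.Walk.support_nil, List.mem_cons, List.mem_singleton, List.not_mem_nil]
    refine ⟨⟨SimpleGraph.Walk.IsPath.nil, ?_⟩, ?_⟩
    · simp [hyz.ne]
    · push_neg
      refine ⟨hx.ne', hne, trivial⟩
  rcases Classical.em (x ∈ p.support) with hxL | hxL
  · obtain ⟨q, hq, hsub⟩ := exists_path_support_subset hp hxL hz
    have heq : (⟨_, hP1⟩ : T.Path x z) = ⟨q, hq⟩ :=
      isAcyclic_iff_path_unique.mp hT.IsAcyclic _ _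
    have heq' : SimpleGraph.Walk.cons hx.symm (SimpleGraph.Walk.cons hyz SimpleGraph.Walk.nil) = q :=
      congrArg Subtype.val heq
    have hy' : y ∈ q.support := by
      rw [← heq']; simp
    exact hy (hsub y hy')
  · obtain ⟨z', hz', hxz'⟩ := hcov x hxL
    obtain ⟨q, hq, hsub⟩ := exists_path_support_subset hp hz' hz
    have hq2 : (SimpleGraph.Walk.cons hxz' q).IsPath := hq.cons (fun hmem => hxL (hsub x hmem))
    have heq : (⟨_, hP1⟩ : T.Path x z) = ⟨SimpleGraph.Walk.cons hxz' q, hq2⟩ :=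
      isAcyclic_iff_path_unique.mp hT.IsAcyclic _ _
    have heq' : SimpleGraph.Walk.cons hx.symm (SimpleGraph.Walk.cons hyz SimpleGraph.Walk.nil)
        = SimpleGraph.Walk.cons hxz' q := congrArg Subtype.val heq
    have hy' : y ∈ (SimpleGraph.Walk.cons hxz' q).support := by
      rw [← heq']; simp
    rw [SimpleGraph.Walk.support_cons, List.mem_cons] at hy'
    rcases hy' with hy' | hy'
    · exact hx.ne hy'
    · exact hy (hsub y hy')

lemma adj_getD {u w : V} (p : T.Walk u w) (d : V) {i : ℕ} (h : i + 1 < p.support.length) :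
    T.Adj (p.support.getD i d) (p.support.getD (i+1) d) := by
  have hch := p.isChain_adj_support
  rw [List.isChain_iff_getElem] at hch
  have h2 := hch i (by omega)
  rw [List.getD_eq_getElem _ _ (by omega), List.getD_eq_getElem _ _ h]
  simpa [List.get_eq_getElem] using h2

lemma getD_zero {u w : V} (p : T.Walk u w) (d : V) : p.support.getD 0 d = u := by
  rw [p.support_eq_cons]; rfl

lemma getD_last {u w : V} (p : T.Walk u w) (d : V) :
    p.support.getD (p.support.length - 1) d = w := by
  have h := p.getLast_support
  rw [List.getLast_eq_getElem] at h
  have hpos : 0 < p.support.length := List.length_pos_iff.2 p.support_ne_nil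
  rw [List.getD_eq_getElem _ _ (by omega)]
  exact h

lemma dist_getD_le (hT : T.IsTree) {u w : V} (p : T.Walk u w) (d : V) :
    ∀ i j, i ≤ j → j < p.support.length →
      T.dist (p.support.getD i d) (p.support.getD j d) ≤ j - i := by
  intro i j hij
  induction j, hij using Nat.le_induction with
  | base => intro _; simp [SimpleGraph.dist_self]
  | succ j hij ih =>
      intro hj
      have h1 := ih (by omega)
      have h2 : T.dist (p.support.getD j d) (p.support.getD (j+1) d) = 1 :=
        SimpleGraph.dist_eq_one_iff_adj.2 (adj_getD p d hj)
      have h3 := hT.isConnected.dist_triangle (u := p.support.getD i d)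
        (v := p.support.getD j d) (w := p.support.getD (j+1) d)
      omega

lemma dist_getD_eq (hT : T.IsTree) {u w : V} {p : T.Walk u w} (hp : p.IsPath) (d : V)
    {i j : ℕ} (hij : i ≤ j) (hj : j < p.support.length) :
    T.dist (p.support.getD i d) (p.support.getD j d) = j - i := by
  have hNpos : 0 < p.support.length := List.length_pos_iff.2 p.support_ne_nil
  have hlen : p.length = p.support.length - 1 := by have := p.length_support; omega
  have hend : T.dist u w = p.support.length - 1 := by
    rw [← tree_path_length hT p hp]; omega
  have h1 : T.dist u (p.support.getD i d) ≤ i := by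
    have := dist_getD_le hT p d 0 i (by omega) (by omega)
    rwa [getD_zero] at this
  have h2 := dist_getD_le hT p d i j hij hj
  have h3 : T.dist (p.support.getD j d) w ≤ p.support.length - 1 - j := by
    have := dist_getD_le hT p d j (p.support.length - 1) (by omega) (by omega)
    rwa [getD_last] at this
  have ht1 := hT.isConnected.dist_triangle (u := u) (v := p.support.getD i d) (w := w)
  have ht2 := hT.isConnected.dist_triangle (u := p.support.getD i d)
    (v := p.support.getD j d) (w := w)
  omega


end Cater

/-- There is a universal constant `C` such that for every caterpillar
tree `T` — a finite tree containing a path `P` (the spine) such that every vertex of `T`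
not on `P` is adjacent to a vertex of `P` — and every prediction `s`, there is a
deterministic search strategy, correct on all of `V(T)`, whose query cost on every target
`t` is at most `C * log₂(dist_T(s,t) + 2)`. -/
theorem search_on_caterpillars :
    ∃ C : ℕ, ∀ (V : Type) [Fintype V] (T : SimpleGraph V), T.IsTree →
      (∃ (u w : V) (p : T.Walk u w), p.IsPath ∧
        ∀ v : V, v ∉ p.support → ∃ z ∈ p.support, T.Adj v z) →
      ∀ s : V, ∃ σ : Strategy V, CorrectOn T σ Set.univ ∧
        ∀ t : V, costOf T σ t ≤ C * Nat.log 2 (T.dist s t + 2) := by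
  refine ⟨11, ?_⟩
  intro V _ T hT hcat s
  classical
  obtain ⟨u, w, p, hp, hcov⟩ := hcat
  set pi : V → V := fun v => if h : v ∈ p.support then v else (hcov v h).choose with hpidef
  have hpiL : ∀ v, pi v ∈ p.support := by
    intro v
    by_cases h : v ∈ p.support
    · simpa [hpidef, h]
    · simp only [hpidef, dif_neg h]
      exact (hcov v h).choose_spec.1
  have hpi_mem : ∀ v ∈ p.support, pi v = v := by
    intro v h; simp [hpidef, h]
  have hpiadj : ∀ v, v ∉ p.support → T.Adj v (pi v) := by
    intro v h
    simp only [hpidef, dif_neg h]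
    exact (hcov v h).choose_spec.2
  have huniq : ∀ y, y ∉ p.support → ∀ x, T.Adj y x → x = pi y := by
    intro y hy x hx
    exact Cater.uniq_neighbor hT hp hcov hy (hpiL y) (hpiadj y hy) hx
  have hleaf : ∀ a, a ∉ p.support → ∀ b, b ≠ a → T.dist b a = T.dist b (pi a) + 1 := by
    intro a ha b hb
    obtain ⟨x, hx1, hx2⟩ := Cater.exists_closer hT a b (fun he => hb he.symm)
    have hxz : x = pi a := huniq a ha x hx1
    subst hxz
    have hc1 : T.dist b a = T.dist a b := SimpleGraph.dist_comm
    have hc2 : T.dist (pi a) b = T.dist b (pi a) := SimpleGraph.dist_comm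
    omega
  have hndist : ∀ i j, i < p.support.length → j < p.support.length →
      T.dist (p.support.getD i u) (p.support.getD j u) = Cater.ndist i j := by
    intro i j hi hj
    rcases le_total i j with h | h
    · rw [Cater.dist_getD_eq hT hp u h hj]
      unfold Cater.ndist; omega
    · have h2 := Cater.dist_getD_eq hT hp u h hi
      have hc : T.dist (p.support.getD i u) (p.support.getD j u)
          = T.dist (p.support.getD j u) (p.support.getD i u) := SimpleGraph.dist_comm
      rw [hc, h2]
      unfold Cater.ndist; omega
  have hdf : ∀ t : V, ∀ i, i < p.support.length →
      T.dist (p.support.getD i u) t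
        = Cater.ndist i (p.support.idxOf (pi t)) + (if t ∈ p.support then 0 else 1) := by
    intro t i hi
    have hjN : p.support.idxOf (pi t) < p.support.length :=
      List.idxOf_lt_length_iff.2 (hpiL t)
    by_cases ht : t ∈ p.support
    · rw [if_pos ht]
      have he : p.support.getD (p.support.idxOf (pi t)) u = t := by
        rw [hpi_mem t ht]
        exact Cater.getD_indexOf (d := u) ht
      have hd := hndist i (p.support.idxOf (pi t)) hi hjN
      rw [he] at hd
      rw [hd]
      omega
    · rw [if_neg ht]
      have hne : p.support.getD i u ≠ t := fun he => ht (he ▸ Cater.getD_mem (d := u) hi)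
      rw [hleaf t ht _ hne]
      have he : p.support.getD (p.support.idxOf (pi t)) u = pi t :=
        Cater.getD_indexOf (d := u) (hpiL t)
      have hd := hndist i (p.support.idxOf (pi t)) hi hjN
      rw [he] at hd
      rw [hd]
  have S : Cater.Setup T p.support pi u :=
    { nodup := hp.support_nodup
      nonnil := p.support_ne_nil
      piL := hpiL
      pi_mem := hpi_mem
      dz := fun a b h => (hT.isConnected.dist_eq_zero_iff).1 h
      tri := fun a b c => hT.isConnected.dist_triangle
      adjd := fun a b h => SimpleGraph.dist_eq_one_iff_adj.2 h
      exi := Cater.exists_closer hT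
      uniq := huniq
      leaf := hleaf
      df := hdf }
  exact Cater.master S s
end

section
/- There is a universal constant C such that for every finite tree T on n vertices there exists a deterministic search strategy, correct on all of V(T), whose query cost on every target t ∈ V(T) is at most C · log₂(n + 1). -/
open SimpleGraph

lemma dirO_some_spec {V : Type} {T : SimpleGraph V} {t v u : V}
    (h : dirO T t v = some u) : T.Adj v u ∧ T.dist u t + 1 = T.dist v t := by
  classical
  unfold dirO at h
  by_cases hP : ∃ w, T.Adj v w ∧ T.dist w t + 1 = T.dist v t
  · rw [dif_pos hP] at h
    have hs := hP.choose_spec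
    obtain rfl : hP.choose = u := Option.some.inj h
    exact hs
  · rw [dif_neg hP] at h
    exact absurd h (by simp)

lemma dirO_some_of_ne {V : Type} {T : SimpleGraph V} (hconn : T.Connected) {t v : V}
    (h : v ≠ t) : ∃ u, dirO T t v = some u := by
  classical
  have hP : ∃ u, T.Adj v u ∧ T.dist u t + 1 = T.dist v t := by
    have hd : 0 < T.dist v t := hconn.pos_dist_of_ne h
    obtain ⟨w, hw⟩ := (hconn v t).exists_walk_length_eq_dist
    obtain ⟨b, hadj, w', rfl⟩ := SimpleGraph.Walk.exists_eq_cons_of_ne h w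
    refine ⟨b, hadj, ?_⟩
    have h1 : T.dist b t ≤ w'.length := SimpleGraph.dist_le w'
    have h2 : T.dist v t ≤ T.dist v b + T.dist b t := hconn.dist_triangle
    have h3 : T.dist v b ≤ 1 := SimpleGraph.dist_le hadj.toWalk
    simp only [SimpleGraph.Walk.length_cons] at hw
    omega
  unfold dirO
  rw [dif_pos hP]
  exact ⟨_, rfl⟩

lemma centroid_halves {V : Type} {T : SimpleGraph V} (hconn : T.Connected)
    (S : Finset V) (c : V)
    (hmin : ∀ d : V, (∑ s ∈ S, T.dist c s) ≤ ∑ s ∈ S, T.dist d s)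
    {u : V} (hadj : T.Adj c u) :
    2 * (S.filter (fun s => T.dist u s < T.dist c s)).card ≤ S.card := by
  classical
  by_contra hgt
  push_neg at hgt
  set p : V → Prop := fun s => T.dist u s < T.dist c s with hp
  have h1 : (∑ s ∈ S.filter p, T.dist u s) + (S.filter p).card ≤
      ∑ s ∈ S.filter p, T.dist c s := by
    have := Finset.sum_le_sum (f := fun s => T.dist u s + 1) (g := fun s => T.dist c s)
      (s := S.filter p) (fun s hs => (Finset.mem_filter.mp hs).2)
    simpa [Finset.sum_add_distrib, Finset.sum_const, mul_one] using this
  have h2 : (∑ s ∈ S.filter (fun s => ¬ p s), T.dist u s) ≤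
      (∑ s ∈ S.filter (fun s => ¬ p s), T.dist c s) + (S.filter (fun s => ¬ p s)).card := by
    have hle : ∀ s ∈ S.filter (fun s => ¬ p s), T.dist u s ≤ T.dist c s + 1 := by
      intro s _
      have htri : T.dist u s ≤ T.dist u c + T.dist c s := hconn.dist_triangle
      have hcu : T.dist u c ≤ 1 := SimpleGraph.dist_le hadj.symm.toWalk
      omega
    calc (∑ s ∈ S.filter (fun s => ¬ p s), T.dist u s)
        ≤ ∑ s ∈ S.filter (fun s => ¬ p s), (T.dist c s + 1) := Finset.sum_le_sum hle
      _ = (∑ s ∈ S.filter (fun s => ¬ p s), T.dist c s) + (S.filter (fun s => ¬ p s)).card := by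
          simp [Finset.sum_add_distrib, Finset.sum_const, mul_one]
  have hsplitu : (∑ s ∈ S.filter p, T.dist u s) + (∑ s ∈ S.filter (fun s => ¬ p s), T.dist u s)
      = ∑ s ∈ S, T.dist u s := Finset.sum_filter_add_sum_filter_not S p _
  have hsplitc : (∑ s ∈ S.filter p, T.dist c s) + (∑ s ∈ S.filter (fun s => ¬ p s), T.dist c s)
      = ∑ s ∈ S, T.dist c s := Finset.sum_filter_add_sum_filter_not S p _
  have hcards : (S.filter p).card + (S.filter (fun s => ¬ p s)).card = S.card :=
    Finset.card_filter_add_card_filter_not (p := p)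
  have hminu := hmin u
  have hgt2 : S.card < 2 * (S.filter p).card := hgt
  omega

/-- There is a universal constant `C` such that every finite tree `T` on
`n` vertices admits a deterministic search strategy, correct on all of `V(T)`, whose query
cost on every target is at most `C * log₂(n + 1)`. -/
theorem search_on_trees_centroid_bound :
    ∃ C : ℕ, ∀ (V : Type) [Fintype V] (T : SimpleGraph V), T.IsTree →
      ∃ σ : Strategy V, CorrectOn T σ Set.univ ∧
        ∀ t : V, costOf T σ t ≤ C * Nat.log 2 (Fintype.card V + 1) := by
  classical
  refine ⟨2, ?_⟩
  intro V _ T hT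
  have hconn : T.Connected := hT.isConnected
  have hne : Nonempty V := hconn.nonempty
  set cons : List (V × Option V) → Finset V :=
    fun h => Finset.univ.filter (fun s => ∀ p ∈ h, dirO T s p.1 = p.2) with hcons
  have hctrex : ∀ S : Finset V, ∃ c : V, ∀ d : V,
      (∑ s ∈ S, T.dist c s) ≤ ∑ s ∈ S, T.dist d s := by
    intro S
    obtain ⟨c, -, hc⟩ := Finset.exists_min_image Finset.univ
      (fun c => ∑ s ∈ S, T.dist c s) ⟨Classical.arbitrary V, Finset.mem_univ _⟩
    exact ⟨c, fun d => hc d (Finset.mem_univ d)⟩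
  choose ctr hctrmin using hctrex
  set σ : Strategy V := fun h => ctr (cons h) with hσ
  have key : ∀ t : V, ∃ j, j ≤ Nat.log 2 (Fintype.card V) ∧ queryAt T σ t j = t := by
    intro t
    by_contra hno
    push_neg at hno
    set K := Nat.log 2 (Fintype.card V) + 1 with hK
    have main : ∀ k, k ≤ K → t ∈ cons (histRun T σ t k) ∧
        (cons (histRun T σ t k)).card * 2 ^ k ≤ Fintype.card V := by
      intro k
      induction k with
      | zero =>
          intro _
          constructor
          · simp [hcons, histRun]
          · simp [hcons, histRun, Finset.card_univ]
      | succ k ih =>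
          intro hk
          obtain ⟨htmem, hcard⟩ := ih (by omega)
          set c := σ (histRun T σ t k) with hc
          have hct : c ≠ t := by
            intro h
            exact hno k (by omega) h
          obtain ⟨u, hu⟩ := dirO_some_of_ne hconn hct
          have huspec := dirO_some_spec hu
          have hstep : cons (histRun T σ t (k + 1)) =
              (cons (histRun T σ t k)).filter (fun s => dirO T s c = some u) := by
            ext s
            simp only [hcons, Finset.mem_filter, Finset.mem_univ, true_and, histRun,
              List.forall_mem_append, List.forall_mem_singleton]
            rw [← hc, hu]
          have htmem' : t ∈ cons (histRun T σ t (k + 1)) := by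
            rw [hstep]
            exact Finset.mem_filter.mpr ⟨htmem, hu⟩
          have hsub : cons (histRun T σ t (k + 1)) ⊆
              (cons (histRun T σ t k)).filter (fun s => T.dist u s < T.dist c s) := by
            rw [hstep]
            intro s hs
            rw [Finset.mem_filter] at hs ⊢
            obtain ⟨hs1, hs2⟩ := hs
            have := (dirO_some_spec hs2).2
            exact ⟨hs1, by omega⟩
          have hcc : c = ctr (cons (histRun T σ t k)) := by rw [hc, hσ]
          have hhalf : 2 * ((cons (histRun T σ t k)).filter
              (fun s => T.dist u s < T.dist c s)).card ≤ (cons (histRun T σ t k)).card := by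
            simp only [hcc]
            exact centroid_halves hconn _ _ (hctrmin _) (hcc ▸ huspec.1)
          have hc2 : (cons (histRun T σ t (k + 1))).card * 2 ≤
              (cons (histRun T σ t k)).card := by
            have := Finset.card_le_card hsub
            omega
          refine ⟨htmem', ?_⟩
          calc (cons (histRun T σ t (k + 1))).card * 2 ^ (k + 1)
              = (cons (histRun T σ t (k + 1))).card * 2 * 2 ^ k := by ring
            _ ≤ (cons (histRun T σ t k)).card * 2 ^ k := Nat.mul_le_mul_right _ hc2
            _ ≤ Fintype.card V := hcard
    obtain ⟨hmem, hbound⟩ := main K le_rfl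
    have h1 : 1 ≤ (cons (histRun T σ t K)).card := Finset.card_pos.mpr ⟨t, hmem⟩
    have h2 : 2 ^ K ≤ Fintype.card V := by
      calc 2 ^ K = 1 * 2 ^ K := (one_mul _).symm
        _ ≤ (cons (histRun T σ t K)).card * 2 ^ K := Nat.mul_le_mul_right _ h1
        _ ≤ Fintype.card V := hbound
    have h3 : Fintype.card V < 2 ^ K := Nat.lt_pow_succ_log_self (by norm_num) _
    omega
  refine ⟨σ, ?_, ?_⟩
  · intro t _
    obtain ⟨j, -, hj⟩ := key t
    exact ⟨j, hj⟩
  · intro t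
    obtain ⟨j, hjle, hj⟩ := key t
    have hInf : sInf {n | queryAt T σ t n = t} ≤ j := Nat.sInf_le hj
    have hlog1 : 1 ≤ Nat.log 2 (Fintype.card V + 1) :=
      Nat.log_pos (by norm_num) (by have := Fintype.card_pos (α := V); omega)
    have hmono : Nat.log 2 (Fintype.card V) ≤ Nat.log 2 (Fintype.card V + 1) :=
      Nat.log_mono_right (by omega)
    unfold costOf
    omega
end
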